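/- arXiv:2401.15016 — 6 statements merged into one kernel-verified Lean document; each statement's English description precedes it below -/
import Mathlib

section
/- Let L and N be integers with 0 < N < L and let B* = -N^N (L-N)^(L-N) / L^L. For every complex number B with B ≠ 0 and B ≠ B*, the polynomial P_B(Y) = B(1-Y)^L + (-1)^N Y^N has degree exactly L and possesses L pairwise distinct complex roots, none of which equals 0, 1, or -N/(L-N). Moreover, for B = B*, the point y = -N/(L-N) is a common root of P_{B*} and of its derivative, i.e. a multiple root of P_{B*}. -/
open Polynomial

/-- For `0 < N < L` and `B ≠ 0`, `B ≠ B* = -N^N (L-N)^(L-N)/L^L`,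
the polynomial `P_B(Y) = B(1-Y)^L + (-1)^N Y^N` has degree exactly `L` and `L` pairwise
distinct complex roots, none equal to `0`, `1` or `-N/(L-N)`; and for `B = B*`,
the point `-N/(L-N)` is a common root of `P_{B*}` and its derivative. -/
theorem stmt_0 (L N : ℕ) (hN : 0 < N) (hNL : N < L) :
    let Bstar : ℂ := -(N : ℂ) ^ N * ((L : ℂ) - (N : ℂ)) ^ (L - N) / (L : ℂ) ^ L
    let P : ℂ → Polynomial ℂ := fun B =>
      Polynomial.C B * (1 - Polynomial.X) ^ L + Polynomial.C ((-1 : ℂ) ^ N) * Polynomial.X ^ N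
    let y₀ : ℂ := -(N : ℂ) / ((L : ℂ) - (N : ℂ))
    (∀ B : ℂ, B ≠ 0 → B ≠ Bstar →
      (P B).degree = (L : WithBot ℕ) ∧ (P B).roots.card = L ∧ (P B).roots.Nodup ∧
      ∀ y ∈ (P B).roots, y ≠ 0 ∧ y ≠ 1 ∧ y ≠ y₀) ∧
    (P Bstar).eval y₀ = 0 ∧ (Polynomial.derivative (P Bstar)).eval y₀ = 0 := by
  intro Bstar P y₀
  obtain ⟨K, rfl⟩ : ∃ K, N = K + 1 := ⟨N - 1, by omega⟩
  obtain ⟨M, rfl⟩ : ∃ M, L = K + M + 2 := ⟨L - K - 2, by omega⟩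
  have hb : ((M : ℂ) + 1) ≠ 0 := by exact_mod_cast Nat.cast_add_one_ne_zero (R := ℂ) M
  have hc : ((K : ℂ) + (M : ℂ) + 2) ≠ 0 := by
    have : ((K + M + 2 : ℕ) : ℂ) ≠ 0 := Nat.cast_ne_zero.mpr (by omega)
    push_cast at this; exact this
  have ha1 : ((K : ℂ) + 1) ≠ 0 := by exact_mod_cast Nat.cast_add_one_ne_zero (R := ℂ) K
  have hsub : ((K + M + 2 : ℕ) : ℂ) - ((K + 1 : ℕ) : ℂ) = (M : ℂ) + 1 := by push_cast; ring
  have hNsub : K + M + 2 - (K + 1) = M + 1 := by omega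
  have hy₀ : y₀ = -((K : ℂ) + 1) / ((M : ℂ) + 1) := by
    show -((K + 1 : ℕ) : ℂ) / _ = _
    rw [hsub]; push_cast; ring
  have hBstar : Bstar = -((K : ℂ) + 1) ^ (K + 1) * ((M : ℂ) + 1) ^ (M + 1) /
      ((K : ℂ) + (M : ℂ) + 2) ^ (K + M + 2) := by
    show -((K + 1 : ℕ) : ℂ) ^ (K + 1) * _ ^ (K + M + 2 - (K + 1)) / ((K + M + 2 : ℕ) : ℂ) ^ (K + M + 2) = _
    rw [hsub, hNsub]; push_cast; ring
  have hev : ∀ B y, (P B).eval y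
      = B * (1 - y) ^ (K + M + 2) + (-1 : ℂ) ^ (K + 1) * y ^ (K + 1) := by
    intro B y; simp [P]
  have hdev : ∀ B y, (Polynomial.derivative (P B)).eval y
      = -(B * (((K : ℂ) + M + 2) * (1 - y) ^ (K + M + 1))) +
        (-1 : ℂ) ^ (K + 1) * (((K : ℂ) + 1) * y ^ K) := by
    intro B y
    simp [P, derivative_pow]
  have h1my₀ : (1 : ℂ) - y₀ = ((K : ℂ) + (M : ℂ) + 2) / ((M : ℂ) + 1) := by
    rw [hy₀]; field_simp; ring
  have hevy₀ : ∀ B, (P B).eval y₀ =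
      B * (((K : ℂ) + (M : ℂ) + 2) / ((M : ℂ) + 1)) ^ (K + M + 2)
        + (-1 : ℂ) ^ (K + 1) * (-((K : ℂ) + 1) / ((M : ℂ) + 1)) ^ (K + 1) := by
    intro B
    rw [hev, h1my₀, hy₀]
  have hroot_ne : ∀ B y, B ≠ 0 → B ≠ Bstar → (P B).eval y = 0 → y ≠ 0 ∧ y ≠ 1 ∧ y ≠ y₀ := by
    intro B y hB0 hBs h0
    refine ⟨?_, ?_, ?_⟩
    · rintro rfl; rw [hev] at h0; simp at h0; exact hB0 h0
    · rintro rfl; rw [hev] at h0; simp at h0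
    · rintro rfl
      rw [hevy₀] at h0
      apply hBs
      have hn : (-1 : ℂ) ^ (K + 1) * (-((K : ℂ) + 1)) ^ (K + 1) = ((K : ℂ) + 1) ^ (K + 1) := by
        rw [← mul_pow, neg_one_mul, neg_neg]
      have h2' : (-1 : ℂ) ^ (K + 1) * (-((K : ℂ) + 1) / ((M : ℂ) + 1)) ^ (K + 1)
          = ((K : ℂ) + 1) ^ (K + 1) / ((M : ℂ) + 1) ^ (K + 1) := by
        rw [div_pow, ← mul_div_assoc, hn]
      rw [h2'] at h0
      rw [hBstar, eq_div_iff (pow_ne_zero _ hc)]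
      rw [div_pow] at h0
      apply mul_right_cancel₀ (pow_ne_zero (K + 1) hb)
      field_simp at h0
      linear_combination h0
  constructor
  · intro B hB0 hBs
    have hdeg1 : (1 - Polynomial.X : ℂ[X]).degree = 1 := by
      have h : (1 - Polynomial.X : ℂ[X]) = -(Polynomial.X - Polynomial.C 1) := by
        rw [map_one]; ring
      rw [h, degree_neg, degree_X_sub_C]
    have h1 : (Polynomial.C B * (1 - Polynomial.X : ℂ[X]) ^ (K + M + 2)).degree
        = ((K + M + 2 : ℕ) : WithBot ℕ) := by
      rw [degree_C_mul hB0, degree_pow, hdeg1]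
      simp
    have h2 : (Polynomial.C ((-1 : ℂ) ^ (K + 1)) * Polynomial.X ^ (K + 1) : ℂ[X]).degree
        = ((K + 1 : ℕ) : WithBot ℕ) := by
      rw [degree_C_mul (pow_ne_zero _ (by norm_num)), degree_X_pow]
    have hdeg : (P B).degree = ((K + M + 2 : ℕ) : WithBot ℕ) := by
      show (Polynomial.C B * (1 - Polynomial.X) ^ (K + M + 2)
        + Polynomial.C ((-1 : ℂ) ^ (K + 1)) * Polynomial.X ^ (K + 1)).degree = _
      rw [Polynomial.degree_add_eq_left_of_degree_lt (by
        rw [h1, h2]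
        exact_mod_cast (by omega : K + 1 < K + M + 2)), h1]
    have hPne : P B ≠ 0 := fun h => by
      rw [h, Polynomial.degree_zero] at hdeg
      exact absurd hdeg (by exact_mod_cast (WithBot.bot_ne_coe (a := K + M + 2)))
    have hnat : (P B).natDegree = K + M + 2 := natDegree_eq_of_degree_eq_some hdeg
    have hcard : (P B).roots.card = K + M + 2 := by
      rw [(Polynomial.splits_iff_card_roots).mp (IsAlgClosed.splits _), hnat]
    refine ⟨hdeg, hcard, ?_, ?_⟩
    · classical
      rw [Multiset.nodup_iff_count_le_one]
      intro y
      rw [Polynomial.count_roots]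
      by_contra hcount
      have h2' : 1 < (P B).rootMultiplicity y := by omega
      have hr0 : (P B).IsRoot y := by
        have := Polynomial.isRoot_iterate_derivative_of_lt_rootMultiplicity
          (p := P B) (t := y) (n := 0) (lt_trans one_pos h2')
        simpa using this
      have hr1 : (Polynomial.derivative (P B)).IsRoot y := by
        have := Polynomial.isRoot_iterate_derivative_of_lt_rootMultiplicity
          (p := P B) (t := y) (n := 1) h2'
        simpa using this
      obtain ⟨hy0, hy1, hyy₀⟩ := hroot_ne B y hB0 hBs hr0
      rw [Polynomial.IsRoot, hev] at hr0
      rw [Polynomial.IsRoot, hdev] at hr1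
      have e1 : (-1 : ℂ) ^ (K + 1) * y ^ K * (((K : ℂ) + 1) + ((M : ℂ) + 1) * y) = 0 := by
        linear_combination (1 - y) * hr1 + ((K : ℂ) + (M : ℂ) + 2) * hr0
      have e2 : ((K : ℂ) + 1) + ((M : ℂ) + 1) * y = 0 := by
        rcases mul_eq_zero.mp e1 with h | h
        · rcases mul_eq_zero.mp h with h | h
          · exact absurd h (pow_ne_zero _ (by norm_num))
          · exact absurd h (pow_ne_zero _ hy0)
        · exact h
      apply hyy₀
      rw [hy₀]
      field_simp
      linear_combination e2
    · intro y hy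
      exact hroot_ne B y hB0 hBs (Polynomial.isRoot_of_mem_roots hy)
  · constructor
    · have hn : (-1 : ℂ) ^ (K + 1) * (-((K : ℂ) + 1)) ^ (K + 1) = ((K : ℂ) + 1) ^ (K + 1) := by
        rw [← mul_pow, neg_one_mul, neg_neg]
      have h2' : (-1 : ℂ) ^ (K + 1) * (-((K : ℂ) + 1) / ((M : ℂ) + 1)) ^ (K + 1)
          = ((K : ℂ) + 1) ^ (K + 1) / ((M : ℂ) + 1) ^ (K + 1) := by
        rw [div_pow, ← mul_div_assoc, hn]
      rw [hevy₀, h2', hBstar, div_pow]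
      field_simp
      ring
    · have hsign : ((-1 : ℂ)) ^ (K + 1) * (-1 : ℂ) ^ K = -1 := by
        rw [← pow_add]
        exact Odd.neg_one_pow ⟨K, by omega⟩
      have hA : ((-1 : ℂ)) ^ (K + 1) * (-((K : ℂ) + 1)) ^ K = -(((K : ℂ) + 1) ^ K) := by
        rw [neg_pow ((K : ℂ) + 1), ← mul_assoc, ← pow_add,
          show ((-1 : ℂ)) ^ (K + 1 + K) = -1 from Odd.neg_one_pow ⟨K, by omega⟩, neg_one_mul]
      have h3 : (-1 : ℂ) ^ (K + 1) * (((K : ℂ) + 1) * (-((K : ℂ) + 1) / ((M : ℂ) + 1)) ^ K)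
          = -(((K : ℂ) + 1) ^ (K + 1) / ((M : ℂ) + 1) ^ K) := by
        calc (-1 : ℂ) ^ (K + 1) * (((K : ℂ) + 1) * (-((K : ℂ) + 1) / ((M : ℂ) + 1)) ^ K)
            = ((K : ℂ) + 1) * (((-1 : ℂ)) ^ (K + 1) * (-((K : ℂ) + 1)) ^ K) / ((M : ℂ) + 1) ^ K := by
              rw [div_pow]; ring
          _ = -(((K : ℂ) + 1) ^ (K + 1) / ((M : ℂ) + 1) ^ K) := by rw [hA]; ring
      rw [hdev, h1my₀, hy₀, h3, hBstar, div_pow]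
      field_simp
      ring
end

section
/- Let L and N be integers with 1 ≤ N ≤ L-1. Let π_a be the permutation of {1, …, L} defined by π_a(i) = i+1 for i < L and π_a(L) = 1, and let π_b be the permutation of {1, …, L} defined by π_b(i) = i+1 for 1 ≤ i < N, π_b(N) = 1, π_b(i) = i+1 for N+1 ≤ i < L, and π_b(L) = N+1. Each of π_a and π_b induces a permutation of the set of N-element subsets of {1, …, L} by taking elementwise images. Then the subgroup generated by these two induced permutations acts transitively on the set of N-element subsets of {1, …, L} if and only if gcd(L, N) = 1. -/
set_option maxHeartbeats 1000000

lemma rot_val {n : ℕ} (hn : 1 ≤ n) (i : Fin n) :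
    ((finRotate n i : Fin n) : ℕ) = ((i : ℕ) + 1) % n := by
  obtain ⟨m, rfl⟩ : ∃ m, n = m + 1 := ⟨n - 1, by omega⟩
  rw [finRotate_succ_apply, Fin.add_def, Fin.val_one']
  conv_rhs => rw [Nat.add_mod, Nat.mod_eq_of_lt i.isLt]

lemma rotpow_val {n : ℕ} (hn : 1 ≤ n) (k : ℕ) (x : Fin n) :
    (((finRotate n ^ k) x : Fin n) : ℕ) = ((x : ℕ) + k) % n := by
  induction k with
  | zero => simp [Nat.mod_eq_of_lt x.isLt]
  | succ k ih =>
    rw [pow_succ', Equiv.Perm.mul_apply, rot_val hn, ih, Nat.mod_add_mod, Nat.add_assoc]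

lemma b_val (L N : ℕ) (hN : 1 ≤ N) (hNL : N + 1 ≤ L) (h : N + (L - N) = L) (x : Fin L) :
    (((finCongr h).permCongr (finSumFinEquiv.permCongr
        (Equiv.sumCongr (finRotate N) (finRotate (L - N)))) x : Fin L) : ℕ) =
      if (x : ℕ) < N then ((x : ℕ) + 1) % N
      else N + (((x : ℕ) - N + 1) % (L - N)) := by
  rw [Equiv.permCongr_apply, Equiv.permCongr_apply]
  by_cases hx : (x : ℕ) < N
  · have h1 : (finCongr h).symm x = Fin.castAdd (L - N) ⟨(x : ℕ), hx⟩ := by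
      ext; simp
    rw [h1, finSumFinEquiv_symm_apply_castAdd]
    simp only [Equiv.sumCongr_apply, Sum.map_inl, finSumFinEquiv_apply_left]
    rw [if_pos hx]
    rw [finCongr_apply, Fin.val_cast, Fin.val_castAdd, rot_val hN]
  · have h1 : (finCongr h).symm x = Fin.natAdd N ⟨(x : ℕ) - N, by omega⟩ := by
      ext; simp; omega
    rw [h1, finSumFinEquiv_symm_apply_natAdd]
    simp only [Equiv.sumCongr_apply, Sum.map_inr, finSumFinEquiv_apply_right]
    rw [if_neg hx]
    rw [finCongr_apply, Fin.val_cast, Fin.val_natAdd, rot_val (show 1 ≤ L - N by omega)]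

lemma b_eq (L N : ℕ) (hN : 1 ≤ N) (hNL : N + 1 ≤ L) (h : N + (L - N) = L) :
    (finCongr h).permCongr (finSumFinEquiv.permCongr
        (Equiv.sumCongr (finRotate N) (finRotate (L - N))))
      = finRotate L * Equiv.swap (⟨N - 1, by omega⟩ : Fin L) ⟨L - 1, by omega⟩ := by
  refine Equiv.ext fun x => Fin.ext ?_
  rw [Equiv.Perm.mul_apply, b_val L N hN hNL h x]
  by_cases h1 : x = (⟨N - 1, by omega⟩ : Fin L)
  · subst h1
    rw [Equiv.swap_apply_left, rot_val (by omega), if_pos (by simp; omega)]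
    simp only []
    have e1 : (N - 1) + 1 = N := by omega
    have e2 : (L - 1) + 1 = L := by omega
    rw [e1, e2, Nat.mod_self, Nat.mod_self]
  · by_cases h2 : x = (⟨L - 1, by omega⟩ : Fin L)
    · subst h2
      rw [Equiv.swap_apply_right, rot_val (by omega), if_neg (by simp; omega)]
      simp only []
      have e1 : (N - 1) + 1 = N := by omega
      have e2 : (L - 1) - N + 1 = L - N := by omega
      rw [e1, e2, Nat.mod_self, Nat.mod_eq_of_lt (by omega)]
      omega
    · have hv1 : (x : ℕ) ≠ N - 1 := fun hh => h1 (Fin.ext hh)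
      have hv2 : (x : ℕ) ≠ L - 1 := fun hh => h2 (Fin.ext hh)
      rw [Equiv.swap_apply_of_ne_of_ne h1 h2, rot_val (by omega)]
      have hxL := x.isLt
      by_cases hx : (x : ℕ) < N
      · rw [if_pos hx, Nat.mod_eq_of_lt (by omega), Nat.mod_eq_of_lt (by omega)]
      · rw [if_neg hx, Nat.mod_eq_of_lt (by omega), Nat.mod_eq_of_lt (by omega)]
        omega

/-- with sites labelled by `Fin L` (site `i+1` ↔ `i : Fin L`), the permutation
`π_a = finRotate L` is the full cycle `i ↦ i+1 (mod L)` and `π_b` rotates cyclically the first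
`N` labels and the last `L - N` labels separately.  The subgroup of `Perm (Fin L)` generated by
them acts transitively (via elementwise image) on the `N`-element subsets of `Fin L` iff
`gcd L N = 1`. -/
theorem stmt_2 (L N : ℕ) (hN : 1 ≤ N) (hNL : N ≤ L - 1) :
    (∀ J K : Finset (Fin L), J.card = N → K.card = N →
      ∃ g ∈ Subgroup.closure
        ({finRotate L,
          (finCongr (show N + (L - N) = L by omega)).permCongr
            (finSumFinEquiv.permCongr
              (Equiv.sumCongr (finRotate N) (finRotate (L - N))))} :
          Set (Equiv.Perm (Fin L))),
        Finset.image (⇑g) J = K) ↔ Nat.gcd L N = 1 := by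
  have hL2 : 2 ≤ L := by omega
  have hNL' : N + 1 ≤ L := by omega
  set b : Equiv.Perm (Fin L) :=
    (finCongr (show N + (L - N) = L by omega)).permCongr
      (finSumFinEquiv.permCongr
        (Equiv.sumCongr (finRotate N) (finRotate (L - N)))) with hb
  constructor
  · intro hT
    set d : ℕ := Nat.gcd L N with hd
    have hdL : d ∣ L := Nat.gcd_dvd_left _ _
    have hdN : d ∣ N := Nat.gcd_dvd_right _ _
    have hdLN : d ∣ L - N := Nat.dvd_sub hdL hdN
    have castmod : ∀ (m n : ℕ), d ∣ m → ((n % m : ℕ) : ZMod d) = (n : ZMod d) := by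
      intro m n hm
      conv_rhs => rw [← Nat.mod_add_div n m]
      push_cast
      rw [(ZMod.natCast_eq_zero_iff m d).mpr hm]
      ring
    set S : Subgroup (Equiv.Perm (Fin L)) :=
      { carrier := {g | ∃ c : ZMod d, ∀ x : Fin L,
          (((g x : Fin L) : ℕ) : ZMod d) = ((x : ℕ) : ZMod d) + c},
        one_mem' := ⟨0, fun x => by simp⟩,
        mul_mem' := by
          rintro g₁ g₂ ⟨c₁, h₁⟩ ⟨c₂, h₂⟩
          refine ⟨c₂ + c₁, fun x => ?_⟩
          rw [Equiv.Perm.coe_mul, Function.comp_apply, h₁, h₂]; ring,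
        inv_mem' := by
          rintro g ⟨c, h⟩
          refine ⟨-c, fun x => ?_⟩
          have h' := h (g⁻¹ x)
          rw [show g (g⁻¹ x) = x from g.apply_symm_apply x] at h'
          rw [h']; ring } with hS
    have hgen : Subgroup.closure ({finRotate L, b} : Set (Equiv.Perm (Fin L))) ≤ S := by
      rw [Subgroup.closure_le]
      rintro g (rfl | rfl)
      · refine ⟨1, fun x => ?_⟩
        rw [rot_val (by omega), castmod L _ hdL]
        push_cast; ring
      · refine ⟨1, fun x => ?_⟩
        have hbx := b_val L N hN hNL' (show N + (L - N) = L by omega) x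
        rw [← hb] at hbx
        rw [hbx]
        by_cases hx : (x : ℕ) < N
        · rw [if_pos hx, castmod N _ hdN]; push_cast; ring
        · rw [if_neg hx]
          have hxL := x.isLt
          rw [Nat.cast_add, castmod (L - N) _ hdLN, ← Nat.cast_add,
            show N + ((x : ℕ) - N + 1) = (x : ℕ) + 1 by omega]
          push_cast; ring
    set n1 : Fin L := ⟨N - 1, by omega⟩ with hn1def
    set nn : Fin L := ⟨N, by omega⟩ with hnndef
    set J₀ : Finset (Fin L) := Finset.map (Fin.castLEEmb (show N ≤ L by omega)) Finset.univ
      with hJ₀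
    have hJ₀card : J₀.card = N := by simp [hJ₀]
    have hmemJ₀ : ∀ x : Fin L, x ∈ J₀ ↔ (x : ℕ) < N := by
      intro x
      simp only [hJ₀, Finset.mem_map, Finset.mem_univ, true_and]
      constructor
      · rintro ⟨i, rfl⟩; simp
      · intro hx; exact ⟨⟨(x : ℕ), hx⟩, Fin.ext rfl⟩
    have hn1 : n1 ∈ J₀ := (hmemJ₀ n1).mpr (show N - 1 < N by omega)
    have hnn : nn ∉ J₀.erase n1 := by
      intro hmem
      exact absurd (show N < N from (hmemJ₀ nn).mp (Finset.mem_of_mem_erase hmem)) (by omega)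
    set K₀ : Finset (Fin L) := insert nn (J₀.erase n1) with hK₀
    have hK₀card : K₀.card = N := by
      rw [hK₀, Finset.card_insert_of_notMem hnn, Finset.card_erase_of_mem hn1, hJ₀card]
      omega
    obtain ⟨g, hgmem, hgim⟩ := hT J₀ K₀ hJ₀card hK₀card
    obtain ⟨c, hc⟩ := hgen hgmem
    have hsum1 : ∑ x ∈ K₀, ((x : ℕ) : ZMod d) = (∑ x ∈ J₀, ((x : ℕ) : ZMod d)) + 1 := by
      rw [hK₀, Finset.sum_insert hnn, Finset.sum_erase_eq_sub hn1]
      have e1 : ((nn : Fin L) : ℕ) = N := rfl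
      have e2 : ((n1 : Fin L) : ℕ) = N - 1 := rfl
      rw [e1, e2, Nat.cast_sub hN, (ZMod.natCast_eq_zero_iff N d).mpr hdN]
      push_cast; ring
    have hsum2 : ∑ x ∈ K₀, ((x : ℕ) : ZMod d) = ∑ x ∈ J₀, ((x : ℕ) : ZMod d) := by
      rw [← hgim, Finset.sum_image (fun x _ y _ h => g.injective h)]
      calc ∑ x ∈ J₀, (((g x : Fin L) : ℕ) : ZMod d)
          = ∑ x ∈ J₀, (((x : ℕ) : ZMod d) + c) := Finset.sum_congr rfl fun x _ => hc x
        _ = (∑ x ∈ J₀, ((x : ℕ) : ZMod d)) + J₀.card • c := by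
            rw [Finset.sum_add_distrib, Finset.sum_const]
        _ = ∑ x ∈ J₀, ((x : ℕ) : ZMod d) := by
            rw [hJ₀card, nsmul_eq_mul, (ZMod.natCast_eq_zero_iff N d).mpr hdN]
            ring
    have h10 : (1 : ZMod d) = 0 := add_eq_left.mp (hsum1.symm.trans hsum2)
    have hdvd : d ∣ 1 := (ZMod.natCast_eq_zero_iff 1 d).mp (by exact_mod_cast h10)
    exact Nat.dvd_one.mp hdvd
  · intro hgcd J K hJ hK
    -- closure is everything
    have hbswap := b_eq L N hN hNL' (show N + (L - N) = L by omega)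
    set u : Fin L := ⟨N - 1, by omega⟩
    set v : Fin L := ⟨L - 1, by omega⟩
    have hpow : ((finRotate L ^ (L - N)) u) = v := by
      refine Fin.ext ?_
      rw [rotpow_val (by omega)]
      show ((N - 1) + (L - N)) % L = L - 1
      rw [Nat.mod_eq_of_lt (by omega)]
      omega
    have hcop : Nat.Coprime (L - N) (Fintype.card (Fin L)) := by
      rw [Fintype.card_fin]
      have hd : Nat.gcd (L - N) L ∣ 1 := by
        have d1 : Nat.gcd (L - N) L ∣ L - N := Nat.gcd_dvd_left _ _
        have d2 : Nat.gcd (L - N) L ∣ L := Nat.gcd_dvd_right _ _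
        have d3 : Nat.gcd (L - N) L ∣ N := by
          have := Nat.dvd_sub d2 d1
          rwa [show L - (L - N) = N by omega] at this
        calc Nat.gcd (L - N) L ∣ Nat.gcd L N := Nat.dvd_gcd d2 d3
          _ = 1 := hgcd
      exact Nat.dvd_one.mp hd
    have hcyc : (finRotate L).IsCycle := isCycle_finRotate_of_le hL2
    have hsupp : (finRotate L).support = Finset.univ := support_finRotate_of_le hL2
    have htop1 : Subgroup.closure ({finRotate L, Equiv.swap u v} : Set (Equiv.Perm (Fin L))) = ⊤ := by
      have := Equiv.Perm.closure_cycle_coprime_swap hcop hcyc hsupp u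
      rwa [hpow] at this
    have htop : Subgroup.closure ({finRotate L, b} : Set (Equiv.Perm (Fin L))) = ⊤ := by
      rw [eq_top_iff, ← htop1, Subgroup.closure_le]
      rintro g (rfl | rfl)
      · exact Subgroup.subset_closure (Set.mem_insert _ _)
      · have hswap : Equiv.swap u v = (finRotate L)⁻¹ * b := by
          rw [hb, hbswap]; group
        rw [hswap]
        exact mul_mem (inv_mem (Subgroup.subset_closure (Set.mem_insert _ _)))
          (Subgroup.subset_closure (Set.mem_insert_of_mem _ rfl))
    -- construct the permutation
    classical
    have hJK : J.card = K.card := by rw [hJ, hK]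
    have eJ : {x // x ∈ J} ≃ {x // x ∈ K} :=
      Fintype.equivOfCardEq (by simp [Fintype.card_coe, hJK])
    have eC : {x // ¬ x ∈ J} ≃ {x // ¬ x ∈ K} :=
      Fintype.equivOfCardEq (by
        rw [Fintype.card_subtype_compl, Fintype.card_subtype_compl]
        simp [Fintype.card_coe, hJK])
    refine ⟨Equiv.trans (Equiv.sumCompl (· ∈ J)).symm
        (Equiv.trans (Equiv.sumCongr eJ eC) (Equiv.sumCompl (· ∈ K))), ?_, ?_⟩
    · rw [htop]; exact Subgroup.mem_top _
    · set g : Equiv.Perm (Fin L) := Equiv.trans (Equiv.sumCompl (· ∈ J)).symm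
        (Equiv.trans (Equiv.sumCongr eJ eC) (Equiv.sumCompl (· ∈ K))) with hg
      have hsub : Finset.image (⇑g) J ⊆ K := by
        intro y hy
        rcases Finset.mem_image.mp hy with ⟨x, hx, rfl⟩
        have : g x = (eJ ⟨x, hx⟩ : Fin L) := by
          rw [hg]
          simp [Equiv.sumCompl_symm_apply_of_pos hx]
        rw [this]
        exact (eJ ⟨x, hx⟩).2
      refine Finset.eq_of_subset_of_card_le hsub ?_
      rw [Finset.card_image_of_injective _ g.injective, hJ, hK]
end

section
/- Let L and N be integers with 0 < N < L. Identify particle configurations with N-element subsets C of ℤ/L (equivalently of {1, …, L} with cyclic successor ⊕ and predecessor ⊖, where L ⊕ 1 = 1). For g ∈ ℂ, define the deformed TASEP generator M(g) acting on complex-valued functions ψ of configurations by (M(g)ψ)(C) = ∑_{s ∈ C, s⊖1 ∉ C} g^{[s = 1]} ψ((C \ {s}) ∪ {s⊖1}) − #{s ∈ C : s⊕1 ∉ C} · ψ(C), where [s = 1] equals 1 if s = 1 and 0 otherwise. Suppose y_1, …, y_N are pairwise distinct complex numbers with y_j ∉ {0, 1}, satisfying g (1-y_j)^L ∏_{k=1}^N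 y_k = (-1)^{N+1} y_j^N for every j. Define ψ on the configuration with particles at positions 1 ≤ x_1 < ⋯ < x_N ≤ L by ψ = det_{1≤j,k≤N}( y_j^{-k} (1-y_j)^{x_k} ). Then M(g)ψ = μ ψ with μ = ∑_{j=1}^N y_j / (1 - y_j). -/
/-- The deformed TASEP generator on the ring of `L` sites.  Sites `{1,…,L}` are labelled by
`Fin L` via `site i ↔ (i-1 : Fin L)`, so that the cyclic successor/predecessor `s ⊕ 1`, `s ⊖ 1`
are `s + 1`, `s - 1` in `Fin L`, and "site 1" is `(0 : Fin L)`.  The fugacity `g` weights the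
gain term of the hop from site `L` to site `1` (i.e. the terms with `s = site 1`). -/
noncomputable def tasepGen (L : ℕ) [NeZero L] (g : ℂ)
    (ψ : Finset (Fin L) → ℂ) (C : Finset (Fin L)) : ℂ :=
  (∑ s ∈ C.filter fun s => s - 1 ∉ C,
      (if s = (0 : Fin L) then g else 1) * ψ (insert (s - 1) (C.erase s)))
    - ((C.filter fun s => s + 1 ∉ C).card : ℂ) * ψ C

/-- The Bethe wave function: on a configuration `C` with `N` particles at positions
`1 ≤ x_1 < ⋯ < x_N ≤ L` (so `x_k = (k`-th smallest element of `C` : ℕ) + 1`), it equals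
`det_{1≤j,k≤N} ( y_j^{-k} (1-y_j)^{x_k} )`; it is extended by `0` off the `N`-particle sector. -/
noncomputable def tasepPsi (L N : ℕ) (y : Fin N → ℂ) (C : Finset (Fin L)) : ℂ :=
  if h : C.card = N then
    Matrix.det (Matrix.of fun j k : Fin N =>
      ((y j)⁻¹) ^ ((k : ℕ) + 1) * (1 - y j) ^ (((C.orderEmbOfFin h k) : ℕ) + 1))
  else 0

open Finset Matrix

lemma trace_det {N : ℕ} (A : Matrix (Fin N) (Fin N) ℂ) (c : Fin N → ℂ) :
    ∑ k, (A.updateCol k (fun j => c j * A j k)).det = (∑ j, c j) * A.det := by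
  have h1 : ∀ k : Fin N, (A.updateCol k (fun j => c j * A j k)).det
      = ∑ j, (c j * A j k) * cramer A (Pi.single j 1) k := by
    intro k
    rw [← Matrix.cramer_apply]
    have : (fun j => c j * A j k) = ∑ j, (c j * A j k) • (Pi.single j (1:ℂ) : Fin N → ℂ) := by
      funext i
      simp [Pi.single_apply, Finset.sum_apply, mul_ite]
    rw [this, map_sum]
    simp [Finset.sum_apply, smul_eq_mul]
  simp_rw [h1]
  rw [Finset.sum_comm]
  have h2 : ∀ j : Fin N, ∑ k, (c j * A j k) * cramer A (Pi.single j 1) k = c j * A.det := by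
    intro j
    have h3 := congrFun (Matrix.mulVec_cramer A (Pi.single j (1:ℂ))) j
    simp only [Matrix.mulVec, dotProduct, Pi.smul_apply, Pi.single_eq_same, smul_eq_mul,
      mul_one] at h3
    calc ∑ k, (c j * A j k) * cramer A (Pi.single j 1) k
        = c j * ∑ k, A j k * cramer A (Pi.single j 1) k := by
          rw [Finset.mul_sum]; exact Finset.sum_congr rfl fun k _ => by ring
      _ = c j * A.det := by rw [h3]
  simp_rw [h2]
  rw [← Finset.sum_mul]


lemma tasepPsi_eq {L N : ℕ} (y : Fin N → ℂ) (C : Finset (Fin L)) (h : C.card = N)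
    (f : Fin N → Fin L) (hf : ∀ i, f i ∈ C) (hm : StrictMono f) :
    tasepPsi L N y C = (Matrix.of fun j k : Fin N =>
      ((y j)⁻¹) ^ ((k : ℕ) + 1) * (1 - y j) ^ ((f k : ℕ) + 1)).det := by
  unfold tasepPsi
  rw [dif_pos h]
  have hfe : f = C.orderEmbOfFin h := Finset.orderEmbOfFin_unique h hf hm
  rw [← hfe]

lemma det_free {n : ℕ} (y : Fin (n+1) → ℂ) (hy1 : ∀ j, y j ≠ 1) (x : Fin (n+1) → ℕ) :
    ∑ k, ((Matrix.of fun j k : Fin (n+1) => (y j)⁻¹^((k:ℕ)+1) * (1-y j)^(x k + 1)).updateCol k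
        (fun j => (y j)⁻¹^((k:ℕ)+1) * (1-y j)^(x k))).det
    = ((n+1 : ℂ) + ∑ j, y j / (1 - y j)) *
      (Matrix.of fun j k : Fin (n+1) => (y j)⁻¹^((k:ℕ)+1) * (1-y j)^(x k + 1)).det := by
  set A : Matrix (Fin (n+1)) (Fin (n+1)) ℂ :=
    Matrix.of fun j k : Fin (n+1) => (y j)⁻¹^((k:ℕ)+1) * (1-y j)^(x k + 1) with hA
  have h1y : ∀ j, (1:ℂ) - y j ≠ 0 := fun j => sub_ne_zero.mpr (Ne.symm (hy1 j))
  have hS : ∀ k : Fin (n+1), (fun j => (y j)⁻¹^((k:ℕ)+1) * (1-y j)^(x k))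
      = (fun j => A j k) + (fun j => (y j / (1 - y j)) * A j k) := by
    intro k
    funext j
    simp only [Pi.add_apply, hA, Matrix.of_apply]
    rw [pow_succ]
    have hy : y j / (1 - y j) * (1 - y j) = y j := div_mul_cancel₀ _ (h1y j)
    linear_combination (-((y j)⁻¹ ^ ((k:ℕ)+1) * (1 - y j)^(x k))) * hy
  have step : ∀ k : Fin (n+1), (A.updateCol k
      (fun j => (y j)⁻¹^((k:ℕ)+1) * (1-y j)^(x k))).det
      = A.det + (A.updateCol k (fun j => (y j / (1 - y j)) * A j k)).det := by
    intro k
    rw [hS k, Matrix.det_updateCol_add, Matrix.updateCol_eq_self]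
  calc ∑ k, (A.updateCol k (fun j => (y j)⁻¹^((k:ℕ)+1) * (1-y j)^(x k))).det
      = ∑ k : Fin (n+1), (A.det + (A.updateCol k (fun j => (y j / (1 - y j)) * A j k)).det) :=
        Finset.sum_congr rfl fun k _ => step k
    _ = (n+1 : ℂ) * A.det + (∑ j, y j / (1 - y j)) * A.det := by
        rw [Finset.sum_add_distrib, Finset.sum_const, trace_det]
        simp [nsmul_eq_mul]
    _ = ((n+1 : ℂ) + ∑ j, y j / (1 - y j)) * A.det := by ring


set_option maxHeartbeats 4000000

/-- the Bethe wave function built from a solution of the TASEP Bethe equations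
`g (1-y_j)^L ∏_k y_k = (-1)^{N+1} y_j^N` is an eigenvector of the deformed generator `M(g)`
with eigenvalue `μ = ∑_j y_j/(1-y_j)`. -/
theorem stmt_4 (L N : ℕ) [NeZero L] (hN : 0 < N) (hNL : N < L) (g : ℂ)
    (y : Fin N → ℂ) (hinj : Function.Injective y)
    (hy0 : ∀ j, y j ≠ 0) (hy1 : ∀ j, y j ≠ 1)
    (hBethe : ∀ j, g * (1 - y j) ^ L * ∏ k, y k = (-1 : ℂ) ^ (N + 1) * (y j) ^ N) :
    ∀ C : Finset (Fin L), C.card = N →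
      tasepGen L g (tasepPsi L N y) C
        = (∑ j, y j / (1 - y j)) * tasepPsi L N y C := by
  classical
  obtain ⟨n, rfl⟩ : ∃ n, N = n + 1 := ⟨N - 1, by omega⟩
  obtain ⟨L', rfl⟩ : ∃ m, L = m + 1 := ⟨L - 1, by omega⟩
  have hL'n : n < L' := by omega
  intro C hC
  set e := C.orderEmbOfFin hC with he
  set A : Matrix (Fin (n+1)) (Fin (n+1)) ℂ :=
    Matrix.of (fun j k : Fin (n+1) => (y j)⁻¹ ^ ((k:ℕ)+1) * (1 - y j) ^ ((e k : ℕ) + 1)) with hA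
  set S : Fin (n+1) → Fin (n+1) → ℂ :=
    fun k j => (y j)⁻¹ ^ ((k:ℕ)+1) * (1 - y j) ^ ((e k : ℕ)) with hS
  have h1y : ∀ j, (1:ℂ) - y j ≠ 0 := fun j => sub_ne_zero.mpr (Ne.symm (hy1 j))
  have hP : (∏ m, y m) ≠ 0 := Finset.prod_ne_zero_iff.mpr fun m _ => hy0 m
  have hg : g ≠ 0 := by
    intro h
    have hb := hBethe 0
    rw [h, zero_mul, zero_mul] at hb
    have h2 : ((-1:ℂ)) ^ (n+1+1) * y 0 ^ (n+1) ≠ 0 := by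
      apply mul_ne_zero (pow_ne_zero _ (by norm_num)) (pow_ne_zero _ (hy0 0))
    exact h2 hb.symm
  have hpsiC : tasepPsi (L'+1) (n+1) y C = A.det := by
    unfold tasepPsi; rw [dif_pos hC]
  have hmemC : ∀ k, e k ∈ C := fun k => Finset.orderEmbOfFin_mem C hC k
  have hsurj : ∀ s ∈ C, ∃ k, e k = s := by
    intro s hs
    have h1 : s ∈ Set.range e := by
      rw [he, Finset.range_orderEmbOfFin]; exact hs
    exact h1
  clear_value e
  have hcoe : ∀ k, ((e k - 1 : Fin (L'+1)) : ℕ) = if e k = 0 then L' else (e k : ℕ) - 1 :=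
    fun k => Fin.coe_sub_one (e k)
  have hsub_ne : ∀ a : Fin (L'+1), a - 1 ≠ a := by
    intro a h
    have h1 : (1 : Fin (L'+1)) = 0 := sub_eq_self.mp h
    have h2 : ((1 : Fin (L'+1)) : ℕ) = 1 := by
      rw [Fin.val_one']; exact Nat.mod_eq_of_lt (by omega)
    rw [h1] at h2; simp at h2
  have hcard' : ∀ k, (e k - 1) ∉ C → (insert (e k - 1) (C.erase (e k))).card = n + 1 := by
    intro k hk
    rw [Finset.card_insert_of_notMem (fun h => hk (Finset.mem_of_mem_erase h)),
        Finset.card_erase_of_mem (hmemC k), hC]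
    omega
  have hpow : ∀ (j : Fin (n+1)) (a b : ℕ),
      y j * ((y j)⁻¹^(a+1) * (1-y j)^b) = (y j)⁻¹^a * (1-y j)^b := by
    intro j a b
    rw [pow_succ]
    have hiy := mul_inv_cancel₀ (hy0 j)
    linear_combination ((y j)⁻¹^a * (1 - y j)^b) * hiy
  have key : ∀ k : Fin (n+1), (e k - 1) ∉ C →
      (if e k = 0 then g else 1) * tasepPsi (L'+1) (n+1) y (insert (e k - 1) (C.erase (e k)))
      = (A.updateCol k (S k)).det := by
    intro k hk
    have hC' := hcard' k hk
    by_cases h0 : e k = 0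
    · -- wrap-around hop from site 1 to site L
      have hk0 : k = 0 := by
        have h1 : e 0 ≤ e k := e.monotone (Fin.zero_le k)
        rw [h0] at h1
        have h2 : e 0 = 0 := le_antisymm h1 (Fin.zero_le _)
        exact (e.injective (h2.trans h0.symm)).symm
      subst hk0
      rw [if_pos h0]
      have hek : (e 0 : ℕ) = 0 := by rw [h0]; rfl
      have hval : ((e 0 - 1 : Fin (L'+1)) : ℕ) = L' := by rw [hcoe 0, if_pos h0]
      have hmax : ∀ m, (e m : ℕ) < L' := by
        intro m
        have h1 : (e m : ℕ) < L' + 1 := (e m).isLt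
        have h2 : (e m : ℕ) ≠ L' := by
          intro h
          apply hk
          have h3 : e m = e 0 - 1 := Fin.ext (by rw [hval, h])
          rw [← h3]; exact hmemC m
        omega
      set f : Fin (n+1) → Fin (L'+1) :=
        fun m => if h : (m:ℕ) < n then e ⟨(m:ℕ)+1, by omega⟩ else e 0 - 1 with hf
      have hfmem : ∀ m, f m ∈ insert (e 0 - 1) (C.erase (e 0)) := by
        intro m
        by_cases hm : (m:ℕ) < n
        · have h1 : f m = e ⟨(m:ℕ)+1, by omega⟩ := by simp [hf, hm]
          rw [h1]
          refine Finset.mem_insert_of_mem (Finset.mem_erase.mpr ⟨?_, hmemC _⟩)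
          intro h
          have h2 := congrArg Fin.val (e.injective h)
          simp at h2
        · have h1 : f m = e 0 - 1 := by simp [hf, hm]
          rw [h1]; exact Finset.mem_insert_self _ _
      have hfmono : StrictMono f := by
        intro a b hab
        rw [Fin.lt_def]
        have habv : (a:ℕ) < (b:ℕ) := hab
        by_cases hb : (b:ℕ) < n
        · have ha : (a:ℕ) < n := by omega
          simp only [hf, dif_pos ha, dif_pos hb]
          have h1 : (⟨(a:ℕ)+1, by omega⟩ : Fin (n+1)) < ⟨(b:ℕ)+1, by omega⟩ := by
            rw [Fin.lt_def]; simpa using habv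
          exact Fin.lt_def.mp (e.strictMono h1)
        · have ha : (a:ℕ) < n := by have := b.isLt; omega
          simp only [hf, dif_pos ha, dif_neg hb]
          rw [hval]
          exact hmax _
      rw [tasepPsi_eq y _ hC' f hfmem hfmono]
      set B : Matrix (Fin (n+1)) (Fin (n+1)) ℂ := Matrix.of (fun j m : Fin (n+1) =>
        (y j)⁻¹ ^ ((m:ℕ)+1) * (1 - y j) ^ ((f m : ℕ) + 1)) with hB
      set A' := A.updateCol 0 (S 0) with hA'
      show g * B.det = A'.det
      have hgB : ∀ j, g * B j (Fin.last n) = (-1:ℂ)^(n+2) / (∏ m, y m) := by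
        intro j
        have hb := hBethe j
        have hflast : ((f (Fin.last n) : ℕ)) = L' := by
          simp only [hf]
          rw [dif_neg (by simp)]
          exact hval
        simp only [hB, Matrix.of_apply, hflast, Fin.val_last]
        have hyy : (y j)⁻¹^(n+1) * (y j)^(n+1) = 1 := by
          rw [← mul_pow, inv_mul_cancel₀ (hy0 j), one_pow]
        rw [eq_div_iff hP]
        linear_combination ((y j)⁻¹^(n+1)) * hb + ((-1:ℂ)^(n+1+1)) * hyy
      have step1 : g * B.det = ((-1:ℂ)^(n+2) / (∏ m, y m)) *
          (B.updateCol (Fin.last n) (fun _ => (1:ℂ))).det := by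
        have e1 : g * B.det
            = (B.updateCol (Fin.last n) (g • (fun j => B j (Fin.last n)))).det := by
          rw [Matrix.det_updateCol_smul, Matrix.updateCol_eq_self]
        rw [e1]
        have e2 : (g • (fun j => B j (Fin.last n)))
            = (((-1:ℂ)^(n+2) / (∏ m, y m)) • (fun _ => (1:ℂ))) := by
          funext j
          simp only [Pi.smul_apply, smul_eq_mul, mul_one]
          exact hgB j
        rw [e2, Matrix.det_updateCol_smul]
      have step2 : B.updateCol (Fin.last n) (fun _ => (1:ℂ))
          = Matrix.of (fun j m => y j * (A'.submatrix id (finRotate (n+1))) j m) := by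
        ext j m
        rw [Matrix.updateCol_apply, Matrix.of_apply, Matrix.submatrix_apply,
          finRotate_succ_apply]
        simp only [id]
        by_cases hm : m = Fin.last n
        · rw [if_pos hm, hm, Fin.last_add_one]
          rw [hA', Matrix.updateCol_apply, if_pos rfl]
          simp only [hS, hek, pow_zero, mul_one, Fin.val_zero, pow_one, zero_add]
          exact (mul_inv_cancel₀ (hy0 j)).symm
        · rw [if_neg hm]
          have hmlt : m < Fin.last n := lt_of_le_of_ne (Fin.le_last m) hm
          have hval1 : ((m+1 : Fin (n+1)) : ℕ) = (m:ℕ)+1 := Fin.val_add_one_of_lt hmlt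
          have hm1 : (m + 1 : Fin (n+1)) ≠ 0 := by
            intro h
            rw [h] at hval1
            simp at hval1
          rw [hA', Matrix.updateCol_apply, if_neg hm1, hA, Matrix.of_apply]
          have hmn : (m:ℕ) < n := by
            have h1 := Fin.lt_def.mp hmlt
            simpa using h1
          have hfm : f m = e ⟨(m:ℕ)+1, by omega⟩ := by simp [hf, hmn]
          have hem : e (m+1) = e ⟨(m:ℕ)+1, by omega⟩ :=
            congrArg e (Fin.ext hval1)
          simp only [hB, Matrix.of_apply, hfm]
          have hpw : (y j)⁻¹ ^ (((m+1 : Fin (n+1)):ℕ) + 1) = (y j)⁻¹ ^ (((m:ℕ)+1)+1) := by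
            rw [hval1]
          rw [hem, hpw]
          exact (hpow j ((m:ℕ)+1) _).symm
      have step3 : (Matrix.of (fun j m => y j * (A'.submatrix id (finRotate (n+1))) j m)).det
          = (∏ m, y m) * (((-1:ℂ)^n) * A'.det) := by
        have e3 : Matrix.of (fun j m => y j * (A'.submatrix id (finRotate (n+1))) j m)
            = Matrix.diagonal y * (A'.submatrix id (finRotate (n+1))) := by
          ext j m
          rw [Matrix.diagonal_mul, Matrix.of_apply]
        rw [e3, Matrix.det_mul, Matrix.det_diagonal, Matrix.det_permute',
          sign_finRotate]
        norm_num
      rw [step1, step2, step3]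
      have hss : (-1:ℂ)^(n+2) * (-1:ℂ)^n = 1 := by
        rw [← pow_add]
        have h2 : n+2+n = 2*(n+1) := by omega
        rw [h2, pow_mul]; norm_num
      rw [div_mul_eq_mul_div, div_eq_iff hP]
      linear_combination ((∏ m, y m) * A'.det) * hss
    · -- bulk hop
      rw [if_neg h0, one_mul]
      have hek0 : (e k : ℕ) ≠ 0 := fun h => h0 (Fin.ext h)
      have hval : ((e k - 1 : Fin (L'+1)) : ℕ) = (e k : ℕ) - 1 := by rw [hcoe k, if_neg h0]
      set f : Fin (n+1) → Fin (L'+1) := fun m => if m = k then e k - 1 else e m with hf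
      have hfmem : ∀ m, f m ∈ insert (e k - 1) (C.erase (e k)) := by
        intro m
        by_cases hm : m = k
        · subst hm; simp only [hf, if_pos rfl]; exact Finset.mem_insert_self _ _
        · have h1 : f m = e m := by simp [hf, hm]
          rw [h1]
          exact Finset.mem_insert_of_mem
            (Finset.mem_erase.mpr ⟨fun h => hm (e.injective h), hmemC m⟩)
      have hfmono : StrictMono f := by
        intro a b hab
        have hane : ∀ m, e m ≠ e k - 1 := fun m h => hk (h ▸ hmemC m)
        rw [Fin.lt_def]
        by_cases ha : a = k
        · subst ha
          have hbk : b ≠ a := ne_of_gt hab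
          simp only [hf, if_pos rfl, if_neg hbk]
          have h1 := Fin.lt_def.mp (e.strictMono hab)
          rw [hval]
          omega
        · by_cases hb : b = k
          · subst hb
            simp only [hf, if_neg ha, if_pos rfl]
            have h1 := Fin.lt_def.mp (e.strictMono hab)
            have h2 : (e a : ℕ) ≠ (e b : ℕ) - 1 := by
              intro h
              exact hane a (Fin.ext (by rw [hval, h]))
            rw [hval]
            omega
          · simp only [hf, if_neg ha, if_neg hb]
            exact Fin.lt_def.mp (e.strictMono hab)
      rw [tasepPsi_eq y _ hC' f hfmem hfmono]
      congr 1
      ext j m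
      rw [Matrix.of_apply, Matrix.updateCol_apply]
      by_cases hm : m = k
      · rw [if_pos hm, hm]
        simp only [hf, if_pos rfl, hS]
        rw [hval]
        have h1 : (e k : ℕ) - 1 + 1 = (e k : ℕ) := by omega
        rw [h1]
      · rw [if_neg hm]
        simp only [hf, if_neg hm, hA, Matrix.of_apply]
  have blocked : ∀ k : Fin (n+1), (e k - 1) ∈ C →
      (A.updateCol k (S k)).det = A.det := by
    intro k hk
    obtain ⟨m, hm⟩ := hsurj _ hk
    have hmk : m ≠ k := fun h => hsub_ne (e k) ((h ▸ hm).symm)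
    by_cases h0 : e k = 0
    · -- wrap-around blocked case: k = 0, m = last
      have hk0 : k = 0 := by
        have h1 : e 0 ≤ e k := e.monotone (Fin.zero_le k)
        rw [h0] at h1
        have h2 : e 0 = 0 := le_antisymm h1 (Fin.zero_le _)
        exact (e.injective (h2.trans h0.symm)).symm
      subst hk0
      have hek : (e 0 : ℕ) = 0 := by rw [h0]; rfl
      have hmval : (e m : ℕ) = L' := by rw [hm, hcoe 0, if_pos h0]
      have hmn : (m:ℕ) = n := by
        by_contra hne
        have h1 : (m:ℕ) < n := by have := m.isLt; omega
        have h2 : m < Fin.last n := by rw [Fin.lt_def]; simpa using h1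
        have h3 : e m < e (Fin.last n) := e.strictMono h2
        rw [Fin.lt_def, hmval] at h3
        have h4 : ((e (Fin.last n)) : ℕ) < L' + 1 := (e (Fin.last n)).isLt
        omega
      set c' : ℂ := (-1:ℂ)^(n+2) * g * (∏ m, y m) with hc'
      have hcol : S 0 = (fun j => A j 0) + (fun j => c' * A j m) := by
        funext j
        have hb := hBethe j
        have hone : c' * A j m = 1 := by
          simp only [hA, Matrix.of_apply, hmval, hmn]
          have hyy : (y j)⁻¹^(n+1) * (y j)^(n+1) = 1 := by
            rw [← mul_pow, inv_mul_cancel₀ (hy0 j), one_pow]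
          have hss : (-1:ℂ)^(n+2) * (-1:ℂ)^(n+1+1) = 1 := by
            rw [← pow_add]
            have h2 : (n+2) + (n+1+1) = 2*(n+2) := by omega
            rw [h2, pow_mul]; norm_num
          calc c' * ((y j)⁻¹^(n+1) * (1 - y j)^(L'+1))
              = (-1:ℂ)^(n+2) * (y j)⁻¹^(n+1) * (g * (1 - y j)^(L'+1) * (∏ m, y m)) := by
                rw [hc']; ring
            _ = (-1:ℂ)^(n+2) * (y j)⁻¹^(n+1) * ((-1)^(n+1+1) * y j^(n+1)) := by rw [hb]
            _ = ((-1:ℂ)^(n+2) * (-1:ℂ)^(n+1+1)) * ((y j)⁻¹^(n+1) * y j^(n+1)) := by ring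
            _ = 1 := by rw [hyy, hss, one_mul]
        simp only [Pi.add_apply]
        rw [hone]
        simp only [hS, hA, Matrix.of_apply, hek, Fin.val_zero, pow_zero, mul_one, pow_one,
          zero_add]
        have hiy := inv_mul_cancel₀ (hy0 j)
        linear_combination hiy
      rw [hcol, Matrix.det_updateCol_add, Matrix.updateCol_eq_self]
      have h2 : (A.updateCol 0 (fun j => c' * A j m)).det = 0 := by
        have h3 : (fun j => c' * A j m) = c' • (fun j => A j m) := by
          funext j; simp [smul_eq_mul]
        rw [h3, Matrix.det_updateCol_smul, Matrix.det_updateCol_eq_zero hmk, mul_zero]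
      rw [h2, add_zero]
    · -- bulk blocked case: m = k - 1
      have hek0 : (e k : ℕ) ≠ 0 := fun h => h0 (Fin.ext h)
      have hmval : (e m : ℕ) = (e k : ℕ) - 1 := by rw [hm, hcoe k, if_neg h0]
      have hmlt : m < k := by
        have h1 : e m < e k := by rw [Fin.lt_def]; omega
        exact e.lt_iff_lt.mp h1
      have hmk1 : (m:ℕ)+1 = (k:ℕ) := by
        rw [Fin.lt_def] at hmlt
        by_contra hne
        have h1 : (m:ℕ)+1 < (k:ℕ) := by omega
        have h2 : m < (⟨(m:ℕ)+1, by omega⟩ : Fin (n+1)) := by rw [Fin.lt_def]; simp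
        have h3 : (⟨(m:ℕ)+1, by omega⟩ : Fin (n+1)) < k := by rw [Fin.lt_def]; simpa using h1
        have h4 := e.strictMono h2
        have h5 := e.strictMono h3
        rw [Fin.lt_def] at h4 h5
        omega
      have hcol : S k = (fun j => A j k) + (fun j => A j m) := by
        funext j
        simp only [Pi.add_apply, hS, hA, Matrix.of_apply]
        have e1 : (k:ℕ)+1 = ((m:ℕ)+1)+1 := by omega
        have e2 : (e k:ℕ)+1 = ((e m:ℕ)+1)+1 := by omega
        have e3 : (e k:ℕ) = (e m:ℕ)+1 := by omega
        rw [e1, e2, e3, pow_succ ((y j)⁻¹) ((m:ℕ)+1), pow_succ (1 - y j) ((e m:ℕ)+1)]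
        have hiy := inv_mul_cancel₀ (hy0 j)
        linear_combination ((y j)⁻¹^((m:ℕ)+1) * (1 - y j)^((e m:ℕ)+1)) * hiy
      rw [hcol, Matrix.det_updateCol_add, Matrix.updateCol_eq_self,
        Matrix.det_updateCol_eq_zero hmk, add_zero]
  have free : ∑ k, (A.updateCol k (S k)).det
      = ((n+1 : ℂ) + ∑ j, y j / (1 - y j)) * A.det :=
    det_free y hy1 (fun k => (e k : ℕ))
  have reindex : (∑ s ∈ C.filter fun s => s - 1 ∉ C,
        (if s = (0 : Fin (L'+1)) then g else 1) *
          tasepPsi (L'+1) (n+1) y (insert (s - 1) (C.erase s)))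
      = ∑ k ∈ univ.filter (fun k : Fin (n+1) => e k - 1 ∉ C),
          (A.updateCol k (S k)).det := by
    have h1 : (∑ k ∈ univ.filter (fun k : Fin (n+1) => e k - 1 ∉ C),
          (if e k = 0 then g else 1) *
            tasepPsi (L'+1) (n+1) y (insert (e k - 1) (C.erase (e k))))
        = ∑ s ∈ C.filter fun s => s - 1 ∉ C,
            (if s = (0 : Fin (L'+1)) then g else 1) *
              tasepPsi (L'+1) (n+1) y (insert (s - 1) (C.erase s)) := by
      apply Finset.sum_bij (i := fun k _ => e k)
      · intro k hk
        exact Finset.mem_filter.mpr ⟨hmemC k, (Finset.mem_filter.mp hk).2⟩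
      · intro a _ b _ hab
        exact e.injective hab
      · intro s hs
        obtain ⟨k, hk⟩ := hsurj s (Finset.mem_filter.mp hs).1
        exact ⟨k, Finset.mem_filter.mpr ⟨Finset.mem_univ k,
          by rw [hk]; exact (Finset.mem_filter.mp hs).2⟩, hk⟩
      · intro k _; rfl
    rw [← h1]
    exact Finset.sum_congr rfl fun k hk => key k (Finset.mem_filter.mp hk).2
  have countA : ((C.filter fun s => s + 1 ∉ C).card : ℂ)
      = ((univ.filter (fun k : Fin (n+1) => e k - 1 ∉ C)).card : ℂ) := by
    have c1 : (univ.filter (fun k : Fin (n+1) => e k - 1 ∉ C)).card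
        = (C.filter fun s => s - 1 ∉ C).card := by
      apply Finset.card_bij (i := fun k _ => e k)
      · intro k hk; exact Finset.mem_filter.mpr ⟨hmemC k, (Finset.mem_filter.mp hk).2⟩
      · intro a _ b _ hab; exact e.injective hab
      · intro s hs
        obtain ⟨k, hk⟩ := hsurj s (Finset.mem_filter.mp hs).1
        exact ⟨k, Finset.mem_filter.mpr ⟨Finset.mem_univ k,
          by rw [hk]; exact (Finset.mem_filter.mp hs).2⟩, hk⟩
    have c2 : (C.filter fun s => s - 1 ∈ C).card = (C.filter fun s => s + 1 ∈ C).card := by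
      refine Finset.card_bij' (fun s _ => s - 1) (fun t _ => t + 1) ?_ ?_ ?_ ?_
      · intro s hs
        have h2 := Finset.mem_filter.mp hs
        have hst : s - 1 + 1 = s := sub_add_cancel s 1
        refine Finset.mem_filter.mpr ⟨h2.2, ?_⟩
        rw [hst]; exact h2.1
      · intro t ht
        have h2 := Finset.mem_filter.mp ht
        have hst : t + 1 - 1 = t := add_sub_cancel_right t 1
        refine Finset.mem_filter.mpr ⟨h2.2, ?_⟩
        rw [hst]; exact h2.1
      · intro s _; show s - 1 + 1 = s; exact sub_add_cancel s 1
      · intro t _; show t + 1 - 1 = t; exact add_sub_cancel_right t 1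
    have n1 := Finset.card_filter_add_card_filter_not (s := C)
      (p := fun s => s - 1 ∈ C)
    have n2 := Finset.card_filter_add_card_filter_not (s := C)
      (p := fun s => s + 1 ∈ C)
    have : (C.filter fun s => s + 1 ∉ C).card
        = (univ.filter (fun k : Fin (n+1) => e k - 1 ∉ C)).card := by omega
    exact_mod_cast congrArg (Nat.cast : ℕ → ℂ) this
  unfold tasepGen
  rw [reindex, countA, hpsiC]
  have hsplit := Finset.sum_filter_add_sum_filter_not Finset.univ
    (fun k : Fin (n+1) => e k - 1 ∉ C) (fun k => (A.updateCol k (S k)).det)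
  have hblocked_sum : ∑ k ∈ univ.filter (fun k : Fin (n+1) => ¬ (e k - 1 ∉ C)),
        (A.updateCol k (S k)).det
      = ((univ.filter (fun k : Fin (n+1) => ¬ (e k - 1 ∉ C))).card : ℂ) * A.det := by
    rw [Finset.sum_congr rfl (fun k hk => blocked k (not_not.mp (Finset.mem_filter.mp hk).2)),
      Finset.sum_const, nsmul_eq_mul]
  have hcards : (univ.filter (fun k : Fin (n+1) => e k - 1 ∉ C)).card
      + (univ.filter (fun k : Fin (n+1) => ¬ (e k - 1 ∉ C))).card = n + 1 := by
    rw [Finset.card_filter_add_card_filter_not, Finset.card_univ, Fintype.card_fin]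
  rw [hblocked_sum, free] at hsplit
  have hFsum := eq_sub_of_add_eq hsplit
  rw [hFsum]
  have hcardsC : ((univ.filter (fun k : Fin (n+1) => e k - 1 ∉ C)).card : ℂ)
      + ((univ.filter (fun k : Fin (n+1) => ¬ (e k - 1 ∉ C))).card : ℂ) = (n+1 : ℂ) := by
    exact_mod_cast congrArg (Nat.cast : ℕ → ℂ) hcards
  linear_combination (-A.det) * hcardsC
end

section
/- Let L and N be integers with 0 < N ≤ L, let q, g ∈ ℂ with q ≠ 0, and let y_1, …, y_N be pairwise distinct nonzero complex numbers satisfying, for every j, the cleared ASEP Bethe equation g (1 - y_j)^L ∏_{k=1}^N (y_k - q y_j) + (-1)^N (1 - q y_j)^L ∏_{k=1}^N (y_j - q y_k) = 0. Set Q(y) = ∏_{j=1}^N (y - y_j). Then there exists a polynomial T of degree at most L such that, for all y ∈ ℂ, T(y) Q(y) = g (1-y)^L Q(q y) + q^N (1 - q y)^L Q(y/q). -/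
open Polynomial

/-- Baxter's T–Q equation for periodic ASEP.  If the pairwise distinct nonzero
`y_j` satisfy the cleared Bethe equations
`g (1-y_j)^L ∏_k (y_k - q y_j) + (-1)^N (1-q y_j)^L ∏_k (y_j - q y_k) = 0`,
then with `Q(y) = ∏_j (y - y_j)` there is a polynomial `T` of degree at most `L` with
`T(y) Q(y) = g (1-y)^L Q(qy) + q^N (1-qy)^L Q(y/q)` for all `y`. -/
theorem stmt_5 (L N : ℕ) (hN : 0 < N) (hNL : N ≤ L) (q g : ℂ) (hq : q ≠ 0)
    (y : Fin N → ℂ) (hinj : Function.Injective y) (hy0 : ∀ j, y j ≠ 0)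
    (hBethe : ∀ j, g * (1 - y j) ^ L * ∏ k, (y k - q * y j)
      + (-1 : ℂ) ^ N * (1 - q * y j) ^ L * ∏ k, (y j - q * y k) = 0) :
    ∃ T : Polynomial ℂ, T.degree ≤ (L : WithBot ℕ) ∧
      ∀ z : ℂ, T.eval z * ∏ j, (z - y j)
        = g * (1 - z) ^ L * ∏ j, (q * z - y j)
          + q ^ N * (1 - q * z) ^ L * ∏ j, (z / q - y j) := by
  set Q : Polynomial ℂ := ∏ j, (X - C (y j)) with hQdef
  set P : Polynomial ℂ := C g * (1 - X) ^ L * ∏ j, (C q * X - C (y j))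
      + C (q ^ N) * (1 - C q * X) ^ L * ∏ j, (C q⁻¹ * X - C (y j)) with hPdef
  have hPeval : ∀ z : ℂ, P.eval z
      = g * (1 - z) ^ L * ∏ j, (q * z - y j)
        + q ^ N * (1 - q * z) ^ L * ∏ j, (q⁻¹ * z - y j) := by
    intro z; simp [hPdef, eval_prod]
  have hsq : ((-1 : ℂ) ^ N) * ((-1 : ℂ) ^ N) = 1 := by
    rw [← pow_add, ← two_mul, pow_mul]; norm_num
  have hroot : ∀ j, P.eval (y j) = 0 := by
    intro j
    have h1 : (∏ k, (q * y j - y k)) = (-1 : ℂ) ^ N * ∏ k, (y k - q * y j) := by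
      calc (∏ k, (q * y j - y k)) = ∏ k, (-1 * (y k - q * y j)) := by
            apply Finset.prod_congr rfl; intros; ring
        _ = (-1 : ℂ) ^ N * ∏ k, (y k - q * y j) := by
            rw [Finset.prod_mul_distrib, Finset.prod_const]; simp
    have h2 : q ^ N * (∏ k, (q⁻¹ * y j - y k)) = ∏ k, (y j - q * y k) := by
      calc q ^ N * (∏ k, (q⁻¹ * y j - y k)) = ∏ k, (q * (q⁻¹ * y j - y k)) := by
            rw [Finset.prod_mul_distrib, Finset.prod_const]; simp
        _ = ∏ k, (y j - q * y k) := by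
            apply Finset.prod_congr rfl; intros; field_simp
    rw [hPeval (y j), h1,
      show q ^ N * (1 - q * y j) ^ L * (∏ k, (q⁻¹ * y j - y k))
          = (1 - q * y j) ^ L * (q ^ N * ∏ k, (q⁻¹ * y j - y k)) from by ring, h2]
    have hb := hBethe j
    linear_combination (-1 : ℂ) ^ N * hb
      - (1 - q * y j) ^ L * (∏ k, (y j - q * y k)) * hsq
  have hQmonic : Q.Monic := by
    apply monic_prod_of_monic; intro j _; exact monic_X_sub_C (y j)
  have hdvd : Q ∣ P := by
    refine Finset.prod_dvd_of_coprime ?_ fun j _ => (dvd_iff_isRoot).mpr (hroot j)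
    exact (pairwise_coprime_X_sub_C hinj).set_pairwise _
  obtain ⟨T, hT⟩ := hdvd
  have hQnd : Q.natDegree = N := by
    rw [hQdef, natDegree_prod_of_monic _ _ fun j _ => monic_X_sub_C (y j)]
    simp
  have hprodnd : ∀ c : ℂ, (∏ j, (C c * X - C (y j))).natDegree ≤ N := by
    intro c
    refine le_trans (natDegree_prod_le _ _) ?_
    refine le_trans (Finset.sum_le_card_nsmul _ _ 1 fun j _ => ?_) (by simp)
    refine le_trans (natDegree_sub_le _ _) ?_
    simp only [natDegree_C, max_le_iff]
    exact ⟨le_trans (natDegree_mul_le) (by simp), by norm_num⟩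
  have hPnd : P.natDegree ≤ L + N := by
    rw [hPdef]
    refine le_trans (natDegree_add_le _ _) (max_le ?_ ?_)
    · refine le_trans (natDegree_mul_le) (add_le_add ?_ (hprodnd q))
      refine le_trans (natDegree_mul_le) ?_
      simp only [natDegree_C, zero_add]
      refine le_trans (natDegree_pow_le) ?_
      have h1 : ((1 : Polynomial ℂ) - X).natDegree ≤ 1 :=
        le_trans (natDegree_sub_le _ _) (by simp)
      calc L * ((1 : Polynomial ℂ) - X).natDegree ≤ L * 1 := Nat.mul_le_mul_left _ h1
        _ = L := by ring
    · refine le_trans (natDegree_mul_le) (add_le_add ?_ (hprodnd q⁻¹))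
      refine le_trans (natDegree_mul_le) ?_
      simp only [natDegree_C, zero_add]
      refine le_trans (natDegree_pow_le) ?_
      have h1 : ((1 : Polynomial ℂ) - C q * X).natDegree ≤ 1 := by
        refine le_trans (natDegree_sub_le _ _) ?_
        simp only [natDegree_one, max_le_iff]
        exact ⟨by norm_num, le_trans (natDegree_mul_le) (by simp)⟩
      calc L * ((1 : Polynomial ℂ) - C q * X).natDegree ≤ L * 1 := Nat.mul_le_mul_left _ h1
        _ = L := by ring
  refine ⟨T, ?_, ?_⟩
  · by_cases hT0 : T = 0
    · simp [hT0]
    · have h := hQmonic.natDegree_mul' hT0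
      rw [← hT] at h
      have hTnd : T.natDegree ≤ L := by omega
      exact le_trans degree_le_natDegree (by exact_mod_cast hTnd)
  · intro z
    have h := congrArg (eval z) hT
    simp only [eval_mul] at h
    have hQz : Q.eval z = ∏ j, (z - y j) := by simp [hQdef, eval_prod]
    have hdivq : (∏ j, (z / q - y j)) = ∏ j, (q⁻¹ * z - y j) := by
      apply Finset.prod_congr rfl; intros; rw [div_eq_inv_mul]
    rw [hdivq, ← hPeval z, h, hQz]
    ring
end

section
/- Define χ_∞(v) = -(1/(4π)) ∫_{-∞}^{∞} Li_2( -y^2 e^{v - y^2} ) dy for v ∈ ℝ, where Li_2(x) = -∫_0^1 (log(1 - x t) / t) dt for x ≤ 0. Then χ_∞ is differentiable on ℝ and, for every real v, χ_∞'(v) = (1/(4π)) ∫_{-∞}^{∞} log( 1 + y^2 e^{v - y^2} ) dy = (1/(2π)) ∫_{-∞}^{∞} y^2 (y^2 - 1) / ( y^2 + e^{y^2 - v} ) dy. -/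
open Real MeasureTheory intervalIntegral Filter Topology Metric Set

noncomputable def Lfun (s : ℝ) : ℝ := ∫ u in (0:ℝ)..s, Real.log (1 + u) / u

lemma Lint_bound {u : ℝ} (hu : 0 < u) : ‖Real.log (1 + u) / u‖ ≤ 1 := by
  rw [Real.norm_eq_abs, abs_div, abs_of_nonneg (Real.log_nonneg (by linarith)), abs_of_pos hu,
    div_le_one hu]
  have := Real.log_le_sub_one_of_pos (show (0:ℝ) < 1 + u by linarith)
  linarith

lemma Lint_integrable {s : ℝ} (hs : 0 ≤ s) :
    IntervalIntegrable (fun u => Real.log (1 + u) / u) volume 0 s := by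
  rw [intervalIntegrable_iff_integrableOn_Ioc_of_le hs]
  refine Measure.integrableOn_of_bounded (M := 1) ?_ ?_ ?_
  · rw [Real.volume_Ioc]; exact ENNReal.ofReal_ne_top
  · exact ((Real.measurable_log.comp (measurable_const.add measurable_id)).div
      measurable_id).aestronglyMeasurable
  · filter_upwards [ae_restrict_mem measurableSet_Ioc] with u hu
    exact Lint_bound hu.1

lemma Lfun_abs_le {s : ℝ} (hs : 0 ≤ s) : |Lfun s| ≤ s := by
  have h := intervalIntegral.norm_integral_le_of_norm_le_const (C := 1)
    (f := fun u => Real.log (1 + u) / u) (a := (0:ℝ)) (b := s) ?_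
  · simpa [Real.norm_eq_abs, abs_of_nonneg hs, Lfun] using h
  · intro u hu
    rw [Set.uIoc_of_le hs] at hu
    exact Lint_bound hu.1

lemma Lfun_zero : Lfun 0 = 0 := intervalIntegral.integral_same

lemma Lfun_hasDerivAt {s : ℝ} (hs : 0 < s) :
    HasDerivAt Lfun (Real.log (1 + s) / s) s := by
  apply intervalIntegral.integral_hasDerivAt_right (Lint_integrable hs.le)
  · exact ⟨Set.univ, Filter.univ_mem,
      ((Real.measurable_log.comp (measurable_const.add measurable_id)).div
        measurable_id).aestronglyMeasurable.restrict⟩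
  · refine ContinuousAt.div ?_ continuousAt_id hs.ne'
    exact (Real.continuousAt_log (by linarith)).comp (by fun_prop)

lemma dilog_eq {x : ℝ} (hx : x ≤ 0) :
    (-∫ t in (0:ℝ)..(1:ℝ), Real.log (1 - x * t) / t) = - Lfun (-x) := by
  rcases eq_or_lt_of_le hx with h | h
  · subst h
    simp [Lfun_zero]
  · have hc : 0 < -x := by linarith
    have h1 : ∀ t : ℝ, Real.log (1 - x * t) / t
        = (-x) * (Real.log (1 + (-x) * t) / ((-x) * t)) := by
      intro t
      by_cases ht : t = 0
      · simp [ht]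
      · have he : 1 - x * t = 1 + (-x) * t := by ring
        rw [he, mul_div_assoc', mul_div_mul_left _ _ hc.ne']
    have h2 : (∫ t in (0:ℝ)..1, Real.log (1 - x * t) / t)
        = ∫ t in (0:ℝ)..1, (-x) * (Real.log (1 + (-x) * t) / ((-x) * t)) :=
      intervalIntegral.integral_congr (fun t _ => h1 t)
    have h3 : (∫ t in (0:ℝ)..1, Real.log (1 + (-x) * t) / ((-x) * t))
        = (-x)⁻¹ • ∫ u in (0:ℝ)..(-x), Real.log (1 + u) / u := by
      have h4 := intervalIntegral.integral_comp_mul_left (a := (0:ℝ)) (b := 1)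
        (f := fun u => Real.log (1 + u) / u) (c := -x) hc.ne'
      simpa using h4
    rw [h2, intervalIntegral.integral_const_mul, h3]
    rw [smul_eq_mul, ← mul_assoc, mul_inv_cancel₀ hc.ne', one_mul]
    rfl

lemma hasDerivAt_sfun (y v : ℝ) :
    HasDerivAt (fun v => y ^ 2 * Real.exp (v - y ^ 2)) (y ^ 2 * Real.exp (v - y ^ 2)) v := by
  have h := ((Real.hasDerivAt_exp (v - y ^ 2)).comp v
    ((hasDerivAt_id v).sub_const (y ^ 2))).const_mul (y ^ 2)
  simpa using h

lemma hasDerivAt_L_comp (y v : ℝ) :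
    HasDerivAt (fun v => Lfun (y ^ 2 * Real.exp (v - y ^ 2)))
      (Real.log (1 + y ^ 2 * Real.exp (v - y ^ 2))) v := by
  by_cases hy : y = 0
  · have heq : (fun v : ℝ => Lfun (y ^ 2 * Real.exp (v - y ^ 2))) = fun _ => (0:ℝ) := by
      funext w; simp [hy, Lfun_zero]
    rw [heq]
    simpa [hy] using hasDerivAt_const v (0:ℝ)
  · have hy2 : 0 < y ^ 2 := lt_of_le_of_ne (sq_nonneg y) (Ne.symm (pow_ne_zero 2 hy))
    have hs : 0 < y ^ 2 * Real.exp (v - y ^ 2) := mul_pos hy2 (Real.exp_pos _)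
    have h := (Lfun_hasDerivAt hs).comp v (hasDerivAt_sfun y v)
    rw [div_mul_cancel₀ _ hs.ne'] at h
    exact h

lemma integrable_pow_gauss (n : ℕ) (c : ℝ) :
    Integrable (fun y : ℝ => y ^ n * Real.exp (c - y ^ 2)) := by
  have hn : (-1 : ℝ) < (n : ℝ) := lt_of_lt_of_le neg_one_lt_zero (Nat.cast_nonneg n)
  have h := (integrable_rpow_mul_exp_neg_mul_sq (b := 1) one_pos hn).const_mul (Real.exp c)
  refine h.congr ?_
  filter_upwards with y
  rw [Real.rpow_natCast, show c - y ^ 2 = c + (-1 * y ^ 2) by ring, Real.exp_add]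
  ring

lemma continuous_sfun (v : ℝ) : Continuous (fun y : ℝ => y ^ 2 * Real.exp (v - y ^ 2)) := by
  fun_prop

lemma continuous_L_comp (v : ℝ) :
    Continuous (fun y : ℝ => Lfun (y ^ 2 * Real.exp (v - y ^ 2))) := by
  rw [continuous_iff_continuousAt]
  intro y
  by_cases hy : y = 0
  · subst hy
    have key : Tendsto (fun y : ℝ => Lfun (y ^ 2 * Real.exp (v - y ^ 2))) (𝓝 0) (𝓝 0) := by
      refine squeeze_zero_norm (a := fun y : ℝ => y ^ 2 * Real.exp (v - y ^ 2))
        (fun y => ?_) ?_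
      · rw [Real.norm_eq_abs]
        exact Lfun_abs_le (by positivity)
      · have h := (continuous_sfun v).tendsto 0
        simpa using h
    simpa [ContinuousAt, Lfun_zero] using key
  · have hy2 : 0 < y ^ 2 := lt_of_le_of_ne (sq_nonneg y) (Ne.symm (pow_ne_zero 2 hy))
    have hs : 0 < y ^ 2 * Real.exp (v - y ^ 2) := mul_pos hy2 (Real.exp_pos _)
    have hcomp := ContinuousAt.comp (g := Lfun)
      (f := fun y : ℝ => y ^ 2 * Real.exp (v - y ^ 2)) (x := y)
      ((Lfun_hasDerivAt hs).continuousAt) ((continuous_sfun v).continuousAt)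
    exact hcomp

lemma integrable_L_comp (v : ℝ) :
    Integrable (fun y : ℝ => Lfun (y ^ 2 * Real.exp (v - y ^ 2))) := by
  apply Integrable.mono' (integrable_pow_gauss 2 v)
    (continuous_L_comp v).aestronglyMeasurable
  filter_upwards with y
  rw [Real.norm_eq_abs]
  exact Lfun_abs_le (by positivity)

lemma log_le_self {s : ℝ} (hs : 0 ≤ s) : Real.log (1 + s) ≤ s := by
  have := Real.log_le_sub_one_of_pos (show (0:ℝ) < 1 + s by linarith)
  linarith

lemma integrable_log_term (v : ℝ) :
    Integrable (fun y : ℝ => Real.log (1 + y ^ 2 * Real.exp (v - y ^ 2))) := by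
  apply Integrable.mono' (integrable_pow_gauss 2 v)
  · apply Continuous.aestronglyMeasurable
    apply (continuous_const.add (continuous_sfun v)).log
    intro y
    have : 0 ≤ y ^ 2 * Real.exp (v - y ^ 2) := by positivity
    exact (by positivity : (0:ℝ) < 1 + y ^ 2 * Real.exp (v - y ^ 2)).ne'
  · filter_upwards with y
    have h0 : 0 ≤ y ^ 2 * Real.exp (v - y ^ 2) := by positivity
    rw [Real.norm_eq_abs, abs_of_nonneg (Real.log_nonneg (by linarith))]
    exact log_le_self h0

lemma hasDerivAt_integral_L (v₀ : ℝ) :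
    HasDerivAt (fun v => ∫ y : ℝ, Lfun (y ^ 2 * Real.exp (v - y ^ 2)))
      (∫ y : ℝ, Real.log (1 + y ^ 2 * Real.exp (v₀ - y ^ 2))) v₀ := by
  have h := _root_.hasDerivAt_integral_of_dominated_loc_of_deriv_le (μ := volume) (x₀ := v₀)
    (s := ball v₀ 1) (ball_mem_nhds v₀ one_pos)
    (F := fun v (y : ℝ) => Lfun (y ^ 2 * Real.exp (v - y ^ 2)))
    (F' := fun v (y : ℝ) => Real.log (1 + y ^ 2 * Real.exp (v - y ^ 2)))
    (bound := fun y : ℝ => y ^ 2 * Real.exp ((v₀ + 1) - y ^ 2))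
    (Eventually.of_forall fun v => (continuous_L_comp v).aestronglyMeasurable)
    (integrable_L_comp v₀)
    ((continuous_const.add (continuous_sfun v₀)).log (fun y => by
      have : 0 ≤ y ^ 2 * Real.exp (v₀ - y ^ 2) := by positivity
      exact (by positivity : (0:ℝ) < 1 + y ^ 2 * Real.exp (v₀ - y ^ 2)).ne')).aestronglyMeasurable
    ?_ (integrable_pow_gauss 2 (v₀ + 1))
    (Eventually.of_forall fun y v _ => hasDerivAt_L_comp y v)
  · exact h.2
  · filter_upwards with y
    intro v hv
    have hvle : v ≤ v₀ + 1 := by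
      have hd : |v - v₀| < 1 := by simpa [Real.dist_eq] using mem_ball.mp hv
      linarith [(abs_lt.1 hd).2]
    have h0 : 0 ≤ y ^ 2 * Real.exp (v - y ^ 2) := by positivity
    rw [Real.norm_eq_abs, abs_of_nonneg (Real.log_nonneg (by linarith))]
    calc Real.log (1 + y ^ 2 * Real.exp (v - y ^ 2)) ≤ y ^ 2 * Real.exp (v - y ^ 2) :=
          log_le_self h0
      _ ≤ y ^ 2 * Real.exp ((v₀ + 1) - y ^ 2) := by
          have : Real.exp (v - y ^ 2) ≤ Real.exp ((v₀ + 1) - y ^ 2) :=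
            Real.exp_le_exp.2 (by linarith)
          nlinarith [sq_nonneg y]

lemma integrable_rational (v : ℝ) :
    Integrable (fun y : ℝ => 2 * y ^ 2 * (y ^ 2 - 1) / (y ^ 2 + Real.exp (y ^ 2 - v))) := by
  apply Integrable.mono'
    (g := fun y : ℝ => 2 * (y ^ 4 * Real.exp (v - y ^ 2)) + 2 * (y ^ 2 * Real.exp (v - y ^ 2)))
    (((integrable_pow_gauss 4 v).const_mul 2).add ((integrable_pow_gauss 2 v).const_mul 2))
  · apply Continuous.aestronglyMeasurable
    apply Continuous.div (by fun_prop) (by fun_prop)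
    intro y
    have h := Real.exp_pos (y ^ 2 - v)
    positivity
  · filter_upwards with y
    have hE : 0 < Real.exp (y ^ 2 - v) := Real.exp_pos _
    have hden : 0 < y ^ 2 + Real.exp (y ^ 2 - v) := by positivity
    have hinv : (y ^ 2 + Real.exp (y ^ 2 - v))⁻¹ ≤ Real.exp (v - y ^ 2) := by
      rw [show Real.exp (v - y ^ 2) = (Real.exp (y ^ 2 - v))⁻¹ by
        rw [← Real.exp_neg]; ring_nf]
      apply inv_anti₀ hE
      nlinarith [sq_nonneg y]
    have habs : |y ^ 2 - 1| ≤ y ^ 2 + 1 := by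
      rw [abs_le]; constructor <;> nlinarith [sq_nonneg y]
    rw [Real.norm_eq_abs, abs_div, abs_of_pos hden, div_eq_mul_inv]
    calc |2 * y ^ 2 * (y ^ 2 - 1)| * (y ^ 2 + Real.exp (y ^ 2 - v))⁻¹
        ≤ (2 * y ^ 2 * (y ^ 2 + 1)) * Real.exp (v - y ^ 2) := by
          apply mul_le_mul _ hinv (by positivity) (by positivity)
          rw [abs_mul, abs_of_nonneg (by positivity : (0:ℝ) ≤ 2 * y ^ 2)]
          exact mul_le_mul_of_nonneg_left habs (by positivity)
      _ = 2 * (y ^ 4 * Real.exp (v - y ^ 2)) + 2 * (y ^ 2 * Real.exp (v - y ^ 2)) := by ring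

lemma tendsto_bound_atTop (v : ℝ) :
    Tendsto (fun y : ℝ => y ^ 4 * Real.exp (v - y ^ 2)) atTop (𝓝 0) := by
  have h := (tendsto_pow_mul_exp_neg_atTop_nhds_zero 2).comp
    (tendsto_pow_atTop (by norm_num : (2:ℕ) ≠ 0) : Tendsto (fun y : ℝ => y ^ 2) atTop atTop)
  have h2 := h.const_mul (Real.exp v)
  rw [mul_zero] at h2
  refine h2.congr fun y => ?_
  simp only [Function.comp]
  rw [show v - y ^ 2 = v + -(y ^ 2) by ring, Real.exp_add]
  ring

lemma tendsto_bound_atBot (v : ℝ) :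
    Tendsto (fun y : ℝ => y ^ 4 * Real.exp (v - y ^ 2)) atBot (𝓝 0) := by
  have h := (tendsto_bound_atTop v).comp tendsto_neg_atBot_atTop
  refine h.congr fun y => ?_
  simp only [Function.comp]
  rw [show (-y) ^ 4 = y ^ 4 by ring, show (-y) ^ 2 = y ^ 2 by ring]

lemma g_norm_le (v : ℝ) {y : ℝ} (hy : 1 ≤ |y|) :
    ‖y * Real.log (1 + y ^ 2 * Real.exp (v - y ^ 2))‖ ≤ y ^ 4 * Real.exp (v - y ^ 2) := by
  have h0 : 0 ≤ y ^ 2 * Real.exp (v - y ^ 2) := by positivity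
  have hlog0 : 0 ≤ Real.log (1 + y ^ 2 * Real.exp (v - y ^ 2)) :=
    Real.log_nonneg (by linarith)
  have hlog : Real.log (1 + y ^ 2 * Real.exp (v - y ^ 2)) ≤ y ^ 2 * Real.exp (v - y ^ 2) :=
    log_le_self h0
  rw [Real.norm_eq_abs, abs_mul, abs_of_nonneg hlog0]
  calc |y| * Real.log (1 + y ^ 2 * Real.exp (v - y ^ 2))
      ≤ |y| * (y ^ 2 * Real.exp (v - y ^ 2)) :=
        mul_le_mul_of_nonneg_left hlog (abs_nonneg y)
    _ ≤ y ^ 4 * Real.exp (v - y ^ 2) := by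
        have h1 : |y| * y ^ 2 ≤ y ^ 4 := by
          have h2 : |y| ≤ y ^ 2 := by nlinarith [abs_nonneg y, sq_abs y]
          nlinarith [sq_nonneg y, abs_nonneg y]
        nlinarith [Real.exp_pos (v - y ^ 2)]

lemma hasDerivAt_g (v y : ℝ) :
    HasDerivAt (fun y : ℝ => y * Real.log (1 + y ^ 2 * Real.exp (v - y ^ 2)))
      (Real.log (1 + y ^ 2 * Real.exp (v - y ^ 2))
        - 2 * y ^ 2 * (y ^ 2 - 1) / (y ^ 2 + Real.exp (y ^ 2 - v))) y := by
  have h1 : HasDerivAt (fun y : ℝ => y ^ 2) (2 * y) y := by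
    simpa using hasDerivAt_pow 2 y
  have h2 : HasDerivAt (fun y : ℝ => Real.exp (v - y ^ 2))
      (Real.exp (v - y ^ 2) * (-(2 * y))) y :=
    (h1.const_sub v).exp
  have hs : HasDerivAt (fun y : ℝ => y ^ 2 * Real.exp (v - y ^ 2))
      (2 * y * Real.exp (v - y ^ 2) + y ^ 2 * (Real.exp (v - y ^ 2) * (-(2 * y)))) y :=
    h1.mul h2
  have hpos : 0 < 1 + y ^ 2 * Real.exp (v - y ^ 2) := by positivity
  have hlog : HasDerivAt (fun y : ℝ => Real.log (1 + y ^ 2 * Real.exp (v - y ^ 2)))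
      ((2 * y * Real.exp (v - y ^ 2) + y ^ 2 * (Real.exp (v - y ^ 2) * (-(2 * y))))
        / (1 + y ^ 2 * Real.exp (v - y ^ 2))) y :=
    (hs.const_add 1).log hpos.ne'
  have hg : HasDerivAt (fun y : ℝ => y * Real.log (1 + y ^ 2 * Real.exp (v - y ^ 2)))
      (1 * Real.log (1 + y ^ 2 * Real.exp (v - y ^ 2)) + y * ((2 * y * Real.exp (v - y ^ 2) + y ^ 2 * (Real.exp (v - y ^ 2) * (-(2 * y))))
          / (1 + y ^ 2 * Real.exp (v - y ^ 2)))) y :=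
    (hasDerivAt_id y).mul hlog
  convert hg using 1
  have hE : Real.exp (y ^ 2 - v) = (Real.exp (v - y ^ 2))⁻¹ := by
    rw [← Real.exp_neg]; ring_nf
  rw [hE]
  have he : (0:ℝ) < Real.exp (v - y ^ 2) := Real.exp_pos _
  have hd1 : (1:ℝ) + y ^ 2 * Real.exp (v - y ^ 2) ≠ 0 := hpos.ne'
  have hd2 : y ^ 2 + (Real.exp (v - y ^ 2))⁻¹ ≠ 0 := by positivity
  field_simp
  ring

lemma integral_log_eq (v : ℝ) :
    (∫ y : ℝ, Real.log (1 + y ^ 2 * Real.exp (v - y ^ 2)))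
      = 2 * ∫ y : ℝ, y ^ 2 * (y ^ 2 - 1) / (y ^ 2 + Real.exp (y ^ 2 - v)) := by
  have hint : Integrable (fun y : ℝ => Real.log (1 + y ^ 2 * Real.exp (v - y ^ 2))
      - 2 * y ^ 2 * (y ^ 2 - 1) / (y ^ 2 + Real.exp (y ^ 2 - v))) :=
    (integrable_log_term v).sub (integrable_rational v)
  have hgtop : Tendsto (fun y : ℝ => y * Real.log (1 + y ^ 2 * Real.exp (v - y ^ 2)))
      atTop (𝓝 0) := by
    apply squeeze_zero_norm' _ (tendsto_bound_atTop v)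
    filter_upwards [eventually_ge_atTop (1:ℝ)] with y hy
    exact g_norm_le v (by rw [abs_of_nonneg (by linarith)]; exact hy)
  have hgbot : Tendsto (fun y : ℝ => y * Real.log (1 + y ^ 2 * Real.exp (v - y ^ 2)))
      atBot (𝓝 0) := by
    apply squeeze_zero_norm' _ (tendsto_bound_atBot v)
    filter_upwards [eventually_le_atBot (-1:ℝ)] with y hy
    exact g_norm_le v (by rw [abs_of_nonpos (by linarith)]; linarith)
  have hIoi := integral_Ioi_of_hasDerivAt_of_tendsto' (a := 0) (m := 0)
    (f := fun y : ℝ => y * Real.log (1 + y ^ 2 * Real.exp (v - y ^ 2)))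
    (f' := fun y : ℝ => Real.log (1 + y ^ 2 * Real.exp (v - y ^ 2))
      - 2 * y ^ 2 * (y ^ 2 - 1) / (y ^ 2 + Real.exp (y ^ 2 - v)))
    (fun x _ => hasDerivAt_g v x) hint.integrableOn hgtop
  have hIic := integral_Iic_of_hasDerivAt_of_tendsto' (a := 0) (m := 0)
    (f := fun y : ℝ => y * Real.log (1 + y ^ 2 * Real.exp (v - y ^ 2)))
    (f' := fun y : ℝ => Real.log (1 + y ^ 2 * Real.exp (v - y ^ 2))
      - 2 * y ^ 2 * (y ^ 2 - 1) / (y ^ 2 + Real.exp (y ^ 2 - v)))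
    (fun x _ => hasDerivAt_g v x) hint.integrableOn hgbot
  have hsplit := integral_Iic_add_Ioi (b := 0) hint.integrableOn hint.integrableOn
  rw [hIoi, hIic] at hsplit
  have htotal : (∫ y : ℝ, (Real.log (1 + y ^ 2 * Real.exp (v - y ^ 2))
      - 2 * y ^ 2 * (y ^ 2 - 1) / (y ^ 2 + Real.exp (y ^ 2 - v)))) = 0 := by
    linarith [hsplit]
  rw [integral_sub (integrable_log_term v) (integrable_rational v), sub_eq_zero] at htotal
  rw [htotal]
  rw [← MeasureTheory.integral_const_mul]
  congr 1
  funext y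
  ring

/-- with `Li₂(x) = -∫₀¹ log(1-xt)/t dt` (for `x ≤ 0`) and
`χ_∞(v) = -(1/(4π)) ∫_{-∞}^∞ Li₂(-y² e^{v-y²}) dy`, the function `χ_∞` is differentiable
on ℝ and `χ_∞'(v) = (1/(4π)) ∫ log(1+y² e^{v-y²}) dy = (1/(2π)) ∫ y²(y²-1)/(y²+e^{y²-v}) dy`. -/
theorem stmt_8 :
    let dilog : ℝ → ℝ := fun x => -∫ t in (0 : ℝ)..(1 : ℝ), Real.log (1 - x * t) / t
    let χ : ℝ → ℝ := fun v => -(1 / (4 * π)) * ∫ y : ℝ, dilog (-(y ^ 2) * Real.exp (v - y ^ 2))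
    Differentiable ℝ χ ∧
    ∀ v : ℝ,
      deriv χ v = (1 / (4 * π)) * ∫ y : ℝ, Real.log (1 + y ^ 2 * Real.exp (v - y ^ 2)) ∧
      deriv χ v = (1 / (2 * π)) *
        ∫ y : ℝ, y ^ 2 * (y ^ 2 - 1) / (y ^ 2 + Real.exp (y ^ 2 - v)) := by
  intro dilog χ
  have hχ : χ = fun v => (1 / (4 * π)) * ∫ y : ℝ, Lfun (y ^ 2 * Real.exp (v - y ^ 2)) := by
    funext v
    show -(1 / (4 * π)) * ∫ y : ℝ, dilog (-(y ^ 2) * Real.exp (v - y ^ 2)) = _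
    have hpt : ∀ y : ℝ, dilog (-(y ^ 2) * Real.exp (v - y ^ 2))
        = - Lfun (y ^ 2 * Real.exp (v - y ^ 2)) := by
      intro y
      have hle : -(y ^ 2) * Real.exp (v - y ^ 2) ≤ 0 := by
        have : 0 ≤ y ^ 2 * Real.exp (v - y ^ 2) := by positivity
        nlinarith
      have h := dilog_eq hle
      show (-∫ t in (0 : ℝ)..(1 : ℝ),
        Real.log (1 - (-(y ^ 2) * Real.exp (v - y ^ 2)) * t) / t) = _
      rw [h, show -(-(y ^ 2) * Real.exp (v - y ^ 2)) = y ^ 2 * Real.exp (v - y ^ 2) by ring]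
    simp only [hpt]
    rw [MeasureTheory.integral_neg]
    ring
  have hderiv : ∀ v : ℝ, HasDerivAt χ
      ((1 / (4 * π)) * ∫ y : ℝ, Real.log (1 + y ^ 2 * Real.exp (v - y ^ 2))) v := by
    intro v
    rw [hχ]
    exact (hasDerivAt_integral_L v).const_mul _
  refine ⟨fun v => (hderiv v).differentiableAt, fun v => ⟨(hderiv v).deriv, ?_⟩⟩
  rw [(hderiv v).deriv, integral_log_eq v]
  have hπ : π ≠ 0 := Real.pi_ne_zero
  field_simp
  ring
end

section
/- Define the power series s(z) = (1/√(2π)) ∑_{k≥1} (-1)^{k+1} z^k / k^{3/2} and Φ(z) = (1/√(2π)) ∑_{k≥1} (-1)^{k+1} z^k / k^{5/2}, both convergent for |z| < 1. Since s(0) = 0 and s'(0) = 1/√(2π) ≠ 0, there is an analytic local inverse z(s) of s near 0, and the composite F = Φ ∘ z is analytic in a neighbourhood of 0. Its derivatives at 0 are F'(0) = 1, F''(0) = √π/2, F'''(0) = (3/2 - 8/(3√3)) π, and F''''(0) = (15/2 + 9/√2 - 24/√3) π^{3/2}. -/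
open Real Filter

open FormalMultilinearSeries

noncomputable def kpzCoeff (α : ℝ) : ℕ → ℝ
  | 0 => 0
  | (k+1) => (1 / Real.sqrt (2*π)) * (-1)^k / ((k:ℝ)+1)^α

noncomputable def kpzF (α : ℝ) : ℝ → ℝ := fun z =>
  (1 / Real.sqrt (2*π)) * ∑' k : ℕ, (-1:ℝ)^k * z^(k+1) / ((k:ℝ)+1)^α

lemma kpz_eps_pos : 0 < 1 / Real.sqrt (2*π) := by positivity

lemma kpz_eps_le_one : 1 / Real.sqrt (2*π) ≤ 1 := by
  rw [div_le_one (by positivity)]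
  rw [show (1:ℝ) = Real.sqrt 1 by simp]
  exact Real.sqrt_le_sqrt (by nlinarith [Real.pi_gt_three])

lemma kpz_one_le_rpow {α : ℝ} (hα : 0 ≤ α) (k : ℕ) : 1 ≤ ((k:ℝ)+1)^α :=
  Real.one_le_rpow (by have := Nat.cast_nonneg (α := ℝ) k; linarith) hα

lemma kpz_coeff_abs_le {α : ℝ} (hα : 0 ≤ α) (n : ℕ) : |kpzCoeff α n| ≤ 1 := by
  cases n with
  | zero => simp [kpzCoeff]
  | succ k =>
    have h1 := kpz_one_le_rpow hα k
    have h0 : (0:ℝ) < ((k:ℝ)+1)^α := lt_of_lt_of_le one_pos h1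
    have hs : (0:ℝ) < Real.sqrt (2*π) := by positivity
    simp only [kpzCoeff, abs_div, abs_mul, abs_pow, abs_neg, abs_one, one_pow, mul_one,
      abs_of_pos h0, abs_of_pos hs]
    calc (1 / Real.sqrt (2*π)) / ((k:ℝ)+1)^α ≤ (1 / Real.sqrt (2*π)) / 1 :=
          div_le_div_of_nonneg_left kpz_eps_pos.le one_pos h1
      _ ≤ 1 := by simpa using kpz_eps_le_one

lemma kpz_radius (α : ℝ) (hα : 0 ≤ α) : 1 ≤ (ofScalars ℝ (kpzCoeff α)).radius := by
  apply le_radius_of_bound _ 1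
  intro n
  rw [ofScalars_norm]
  simpa using kpz_coeff_abs_le hα n

lemma kpz_summable {α : ℝ} (hα : 0 ≤ α) {y : ℝ} (hy : |y| < 1) :
    Summable fun k : ℕ => (-1:ℝ)^k * y^(k+1) / ((k:ℝ)+1)^α := by
  apply Summable.of_norm_bounded (g := fun k => |y|^(k+1))
  · simpa [pow_succ] using (summable_geometric_of_lt_one (abs_nonneg y) hy).mul_right |y|
  · intro k
    have h1 := kpz_one_le_rpow hα k
    have h0 : (0:ℝ) < ((k:ℝ)+1)^α := lt_of_lt_of_le one_pos h1
    rw [Real.norm_eq_abs, abs_div, abs_mul, abs_pow, abs_pow, abs_neg, abs_one, one_pow, one_mul,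
      abs_of_pos h0]
    calc |y|^(k+1) / ((k:ℝ)+1)^α ≤ |y|^(k+1) / 1 :=
          div_le_div_of_nonneg_left (by positivity) one_pos h1
      _ = |y|^(k+1) := by ring

lemma kpz_hasSum {α : ℝ} (hα : 0 ≤ α) {y : ℝ} (hy : |y| < 1) :
    HasSum (fun n => kpzCoeff α n * y^n) (kpzF α y) := by
  have S2 := ((kpz_summable hα hy).hasSum).mul_left (1 / Real.sqrt (2*π))
  have e : (fun k : ℕ => (1/Real.sqrt (2*π)) * ((-1:ℝ)^k * y^(k+1) / ((k:ℝ)+1)^α))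
      = fun k => kpzCoeff α (k+1) * y^(k+1) := by
    funext k; simp only [kpzCoeff]; ring
  rw [e] at S2
  have := (hasSum_nat_add_iff (f := fun n => kpzCoeff α n * y^n) 1).mp S2
  simpa [kpzCoeff, kpzF] using this

lemma kpz_hasFPS (α : ℝ) (hα : 0 ≤ α) :
    HasFPowerSeriesOnBall (kpzF α) (ofScalars ℝ (kpzCoeff α)) 0 1 where
  r_le := kpz_radius α hα
  r_pos := one_pos
  hasSum := by
    intro y hy
    rw [EMetric.mem_ball, edist_zero_right] at hy
    have hy' : |y| < 1 := by
      have := hy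
      simpa [← Real.norm_eq_abs, ← ENNReal.coe_one, ENNReal.coe_lt_coe,
        ← NNReal.coe_lt_coe] using this
    have := kpz_hasSum hα hy'
    convert this using 2 with n
    · rfl
    · rw [ofScalars_apply_eq]; simp [smul_eq_mul, mul_comm]
    · simp

lemma kpz_iteratedDeriv {α : ℝ} (hα : 0 ≤ α) (n : ℕ) :
    iteratedDeriv n (kpzF α) 0 = (n.factorial : ℝ) * kpzCoeff α n := by
  have h := (kpz_hasFPS α hα).factorial_smul (1:ℝ) n
  rw [ofScalars_apply_eq] at h
  rw [iteratedDeriv_eq_iteratedFDeriv, ← h]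
  simp [nsmul_eq_mul, smul_eq_mul, mul_comm]

lemma kpz_analyticAt {α : ℝ} (hα : 0 ≤ α) : AnalyticAt ℝ (kpzF α) 0 :=
  (kpz_hasFPS α hα).analyticAt

lemma kpz_zero (α : ℝ) : kpzF α 0 = 0 := by
  simp [kpzF]

lemma analyticAt_deriv {f : ℝ → ℝ} {x : ℝ} (h : AnalyticAt ℝ f x) :
    AnalyticAt ℝ (deriv f) x := by
  have h1 : AnalyticAt ℝ (fderiv ℝ f) x := h.fderiv
  have h2 : AnalyticAt ℝ (fun y => fderiv ℝ f y 1) x := by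
    exact ((ContinuousLinearMap.apply ℝ ℝ (1:ℝ)).analyticAt _).comp h1
  exact h2.congr (by filter_upwards with y using rfl)

lemma analyticAt_iteratedDeriv {f : ℝ → ℝ} {x : ℝ} (h : AnalyticAt ℝ f x) (n : ℕ) :
    AnalyticAt ℝ (iteratedDeriv n f) x := by
  induction n with
  | zero => simpa [iteratedDeriv_zero] using h
  | succ n ih => rw [iteratedDeriv_succ]; exact analyticAt_deriv ih

lemma ev_mul {f g : ℝ → ℝ} (hf : AnalyticAt ℝ f 0) (hg : AnalyticAt ℝ g 0) :
    deriv (fun t => f t * g t) =ᶠ[nhds (0:ℝ)] fun t => deriv f t * g t + f t * deriv g t := by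
  filter_upwards [hf.eventually_analyticAt, hg.eventually_analyticAt] with t h1 h2
  exact deriv_mul h1.differentiableAt h2.differentiableAt

lemma ev_add {f g : ℝ → ℝ} (hf : AnalyticAt ℝ f 0) (hg : AnalyticAt ℝ g 0) :
    deriv (fun t => f t + g t) =ᶠ[nhds (0:ℝ)] fun t => deriv f t + deriv g t := by
  filter_upwards [hf.eventually_analyticAt, hg.eventually_analyticAt] with t h1 h2
  exact deriv_add h1.differentiableAt h2.differentiableAt

lemma ev_comp {f z : ℝ → ℝ} (hz : AnalyticAt ℝ z 0) (hf : AnalyticAt ℝ f (z 0)) :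
    deriv (fun t => f (z t)) =ᶠ[nhds (0:ℝ)] fun t => deriv f (z t) * deriv z t := by
  have hc : ContinuousAt z 0 := hz.continuousAt
  filter_upwards [hz.eventually_analyticAt, hc.eventually hf.eventually_analyticAt] with t h1 h2
  exact deriv_comp t h2.differentiableAt h1.differentiableAt

lemma ev_iteratedDeriv {f g : ℝ → ℝ} (h : f =ᶠ[nhds (0:ℝ)] g) (n : ℕ) :
    iteratedDeriv n f =ᶠ[nhds (0:ℝ)] iteratedDeriv n g := by
  induction n with
  | zero => simpa [iteratedDeriv_zero] using h
  | succ n ih => rw [iteratedDeriv_succ, iteratedDeriv_succ]; exact ih.deriv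

lemma ev_key {z g h : ℝ → ℝ} (hz : AnalyticAt ℝ z 0) (hg : AnalyticAt ℝ g (z 0))
    (hh : AnalyticAt ℝ h 0) :
    deriv (fun t => g (z t) * h t) =ᶠ[nhds (0:ℝ)]
      fun t => deriv g (z t) * deriv z t * h t + g (z t) * deriv h t := by
  have hgz : AnalyticAt ℝ (fun t => g (z t)) 0 := hg.comp hz
  filter_upwards [ev_mul hgz hh, ev_comp hz hg] with t h1 h2
  rw [h1, h2]

lemma faa {f z : ℝ → ℝ} (hf : AnalyticAt ℝ f 0) (hz : AnalyticAt ℝ z 0) (hz0 : z 0 = 0) :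
    deriv (f ∘ z) 0 = deriv f 0 * deriv z 0 ∧
    iteratedDeriv 2 (f ∘ z) 0 = iteratedDeriv 2 f 0 * deriv z 0 ^ 2
        + deriv f 0 * iteratedDeriv 2 z 0 ∧
    iteratedDeriv 3 (f ∘ z) 0 = iteratedDeriv 3 f 0 * deriv z 0 ^ 3
        + 3 * iteratedDeriv 2 f 0 * deriv z 0 * iteratedDeriv 2 z 0
        + deriv f 0 * iteratedDeriv 3 z 0 ∧
    iteratedDeriv 4 (f ∘ z) 0 = iteratedDeriv 4 f 0 * deriv z 0 ^ 4
        + 6 * iteratedDeriv 3 f 0 * deriv z 0 ^ 2 * iteratedDeriv 2 z 0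
        + 3 * iteratedDeriv 2 f 0 * iteratedDeriv 2 z 0 ^ 2
        + 4 * iteratedDeriv 2 f 0 * deriv z 0 * iteratedDeriv 3 z 0
        + deriv f 0 * iteratedDeriv 4 z 0 := by
  set d1 := deriv f with hd1def
  set d2 := deriv d1 with hd2def
  set d3 := deriv d2 with hd3def
  set d4 := deriv d3 with hd4def
  set e1 := deriv z with he1def
  set e2 := deriv e1 with he2def
  set e3 := deriv e2 with he3def
  set e4 := deriv e3 with he4def
  have hd1 : AnalyticAt ℝ d1 0 := analyticAt_deriv hf
  have hd2 : AnalyticAt ℝ d2 0 := analyticAt_deriv hd1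
  have hd3 : AnalyticAt ℝ d3 0 := analyticAt_deriv hd2
  have hd4 : AnalyticAt ℝ d4 0 := analyticAt_deriv hd3
  have he1 : AnalyticAt ℝ e1 0 := analyticAt_deriv hz
  have he2 : AnalyticAt ℝ e2 0 := analyticAt_deriv he1
  have he3 : AnalyticAt ℝ e3 0 := analyticAt_deriv he2
  have he4 : AnalyticAt ℝ e4 0 := analyticAt_deriv he3
  have hfz : AnalyticAt ℝ f (z 0) := by rwa [hz0]
  have hd1z : AnalyticAt ℝ d1 (z 0) := by rwa [hz0]
  have hd2z : AnalyticAt ℝ d2 (z 0) := by rwa [hz0]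
  have hd3z : AnalyticAt ℝ d3 (z 0) := by rwa [hz0]
  have hd4z : AnalyticAt ℝ d4 (z 0) := by rwa [hz0]
  -- step 1
  have C1 : deriv (f ∘ z) =ᶠ[nhds (0:ℝ)] fun t => d1 (z t) * e1 t := ev_comp hz hfz
  -- step 2
  have C2 : deriv (fun t => d1 (z t) * e1 t) =ᶠ[nhds (0:ℝ)]
      fun t => d2 (z t) * (e1 t * e1 t) + d1 (z t) * e2 t := by
    filter_upwards [ev_key hz hd1z he1] with t h1
    rw [h1]; ring
  -- step 3
  have C3 : deriv (fun t => d2 (z t) * (e1 t * e1 t) + d1 (z t) * e2 t) =ᶠ[nhds (0:ℝ)]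
      fun t => d3 (z t) * (e1 t * e1 t * e1 t) + d2 (z t) * (3 * (e1 t * e2 t))
        + d1 (z t) * e3 t := by
    have a1 : AnalyticAt ℝ (fun t => d2 (z t) * (e1 t * e1 t)) 0 :=
      (hd2z.comp hz).mul (he1.mul he1)
    have a2 : AnalyticAt ℝ (fun t => d1 (z t) * e2 t) 0 := (hd1z.comp hz).mul he2
    filter_upwards [ev_add a1 a2, ev_key (h := fun t => e1 t * e1 t) hz hd2z (he1.mul he1), ev_key hz hd1z he2,
      ev_mul he1 he1] with t h0 h1 h2 h3
    rw [h0, h1, h2, h3]; ring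
  -- step 4
  have C4 : deriv (fun t => d3 (z t) * (e1 t * e1 t * e1 t) + d2 (z t) * (3 * (e1 t * e2 t))
        + d1 (z t) * e3 t) =ᶠ[nhds (0:ℝ)]
      fun t => d4 (z t) * (e1 t * e1 t * e1 t * e1 t)
        + d3 (z t) * (6 * (e1 t * e1 t * e2 t))
        + d2 (z t) * (3 * (e2 t * e2 t) + 4 * (e1 t * e3 t))
        + d1 (z t) * e4 t := by
    have a1 : AnalyticAt ℝ (fun t => d3 (z t) * (e1 t * e1 t * e1 t)) 0 :=
      (hd3z.comp hz).mul ((he1.mul he1).mul he1)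
    have a2 : AnalyticAt ℝ (fun t => d2 (z t) * (3 * (e1 t * e2 t))) 0 :=
      (hd2z.comp hz).mul (analyticAt_const.mul (he1.mul he2))
    have a3 : AnalyticAt ℝ (fun t => d1 (z t) * e3 t) 0 := (hd1z.comp hz).mul he3
    have a12 : AnalyticAt ℝ
        (fun t => d3 (z t) * (e1 t * e1 t * e1 t) + d2 (z t) * (3 * (e1 t * e2 t))) 0 :=
      a1.add a2
    have hder3 : deriv (fun t => 3 * (e1 t * e2 t)) = fun t => 3 * deriv (fun t => e1 t * e2 t) t :=
      deriv_const_mul_field' 3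
    filter_upwards [ev_add a12 a3, ev_add a1 a2,
      ev_key (h := fun t => e1 t * e1 t * e1 t) hz hd3z ((he1.mul he1).mul he1),
      ev_key (h := fun t => 3 * (e1 t * e2 t)) hz hd2z (analyticAt_const.mul (he1.mul he2)),
      ev_key hz hd1z he3,
      ev_mul (f := fun t => e1 t * e1 t) (he1.mul he1) he1, ev_mul he1 he1, ev_mul he1 he2] with t h0 h1 h2 h3 h4 h5 h6 h7
    rw [h0, h1, h2, h3, h4, h5, h6, hder3]
    beta_reduce
    rw [h7]; ring
  -- assemble
  have D1 : iteratedDeriv 1 (f ∘ z) =ᶠ[nhds (0:ℝ)] fun t => d1 (z t) * e1 t := by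
    rw [iteratedDeriv_one]; exact C1
  have D2 : iteratedDeriv 2 (f ∘ z) =ᶠ[nhds (0:ℝ)]
      fun t => d2 (z t) * (e1 t * e1 t) + d1 (z t) * e2 t := by
    rw [show (2:ℕ) = 1 + 1 from rfl, iteratedDeriv_succ]
    exact D1.deriv.trans C2
  have D3 : iteratedDeriv 3 (f ∘ z) =ᶠ[nhds (0:ℝ)]
      fun t => d3 (z t) * (e1 t * e1 t * e1 t) + d2 (z t) * (3 * (e1 t * e2 t))
        + d1 (z t) * e3 t := by
    rw [show (3:ℕ) = 2 + 1 from rfl, iteratedDeriv_succ]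
    exact D2.deriv.trans C3
  have D4 : iteratedDeriv 4 (f ∘ z) =ᶠ[nhds (0:ℝ)]
      fun t => d4 (z t) * (e1 t * e1 t * e1 t * e1 t)
        + d3 (z t) * (6 * (e1 t * e1 t * e2 t))
        + d2 (z t) * (3 * (e2 t * e2 t) + 4 * (e1 t * e3 t))
        + d1 (z t) * e4 t := by
    conv_lhs => rw [show (4:ℕ) = 3 + 1 from rfl, iteratedDeriv_succ]
    exact D3.deriv.trans C4
  have hit2f : iteratedDeriv 2 f = d2 := by
    rw [show (2:ℕ) = 1 + 1 from rfl, iteratedDeriv_succ, iteratedDeriv_one]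
  have hit3f : iteratedDeriv 3 f = d3 := by
    rw [show (3:ℕ) = 2 + 1 from rfl, iteratedDeriv_succ, hit2f]
  have hit4f : iteratedDeriv 4 f = d4 := by
    rw [show (4:ℕ) = 3 + 1 from rfl, iteratedDeriv_succ, hit3f]
  have hit2z : iteratedDeriv 2 z = e2 := by
    rw [show (2:ℕ) = 1 + 1 from rfl, iteratedDeriv_succ, iteratedDeriv_one]
  have hit3z : iteratedDeriv 3 z = e3 := by
    rw [show (3:ℕ) = 2 + 1 from rfl, iteratedDeriv_succ, hit2z]
  have hit4z : iteratedDeriv 4 z = e4 := by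
    rw [show (4:ℕ) = 3 + 1 from rfl, iteratedDeriv_succ, hit3z]
  refine ⟨?_, ?_, ?_, ?_⟩
  · have := C1.eq_of_nhds; rw [this, hz0]
  · have := D2.eq_of_nhds; rw [this, hit2f, hit2z, hz0]; ring
  · have := D3.eq_of_nhds; rw [this, hit2f, hit3f, hit2z, hit3z, hz0]; ring
  · have := D4.eq_of_nhds; rw [this, hit2f, hit3f, hit4f, hit2z, hit3z, hit4z, hz0]; ring

lemma rpow_three_half {x : ℝ} (hx : 0 < x) : x ^ ((3:ℝ)/2) = x * Real.sqrt x := by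
  rw [show (3:ℝ)/2 = 1 + 1/2 by norm_num, Real.rpow_add hx, Real.rpow_one,
    ← Real.sqrt_eq_rpow]

lemma rpow_five_half {x : ℝ} (hx : 0 < x) : x ^ ((5:ℝ)/2) = x^2 * Real.sqrt x := by
  rw [show (5:ℝ)/2 = 2 + 1/2 by norm_num, Real.rpow_add hx, ← Real.sqrt_eq_rpow,
    show (2:ℝ) = ((2:ℕ):ℝ) by norm_num, Real.rpow_natCast]

noncomputable def kpzEquiv : ℝ ≃L[ℝ] ℝ :=
  ContinuousLinearEquiv.unitsEquivAut ℝ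
    (Units.mk0 (1 / Real.sqrt (2*π)) (ne_of_gt kpz_eps_pos))

lemma kpz_series_one :
    FormalMultilinearSeries.ofScalars ℝ (kpzCoeff (3/2)) 1
      = (continuousMultilinearCurryFin1 ℝ ℝ ℝ).symm (kpzEquiv : ℝ →L[ℝ] ℝ) := by
  ext x
  simp [FormalMultilinearSeries.ofScalars, kpzCoeff, kpzEquiv,
    ContinuousLinearEquiv.unitsEquivAut]

lemma kpz_coeff_one :
    ((FormalMultilinearSeries.ofScalars ℝ (kpzCoeff (3/2)) 1) fun _ => (1:ℝ))
      = 1 / Real.sqrt (2*π) := by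
  simp [FormalMultilinearSeries.ofScalars, kpzCoeff]

lemma kpz_strict : HasStrictFDerivAt (kpzF (3/2)) (kpzEquiv : ℝ →L[ℝ] ℝ) 0 := by
  have h := (kpz_hasFPS (3/2) (by norm_num)).hasFPowerSeriesAt.hasStrictDerivAt
  rw [kpz_coeff_one] at h
  exact h.hasStrictFDerivAt_equiv (ne_of_gt kpz_eps_pos)

noncomputable def kpzH : OpenPartialHomeomorph ℝ ℝ := HasStrictFDerivAt.toOpenPartialHomeomorph _ kpz_strict

lemma kpzH_coe : (kpzH : ℝ → ℝ) = kpzF (3/2) := HasStrictFDerivAt.toOpenPartialHomeomorph_coe kpz_strict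

lemma kpzH_source : (0:ℝ) ∈ kpzH.source := HasStrictFDerivAt.mem_toOpenPartialHomeomorph_source kpz_strict

lemma kpzH_zero : kpzH 0 = 0 := by
  have : kpzH 0 = kpzF (3/2) 0 := by rw [kpzH_coe]
  rw [this, kpz_zero]

lemma kpzH_target : (0:ℝ) ∈ kpzH.target := by
  have := kpzH.map_source kpzH_source
  rwa [kpzH_zero] at this

noncomputable def kpzZ : ℝ → ℝ := kpzH.symm

lemma kpzZ_analytic : AnalyticAt ℝ kpzZ 0 := by
  have h : HasFPowerSeriesAt (kpzF (3/2)) (FormalMultilinearSeries.ofScalars ℝ (kpzCoeff (3/2)))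
      0 := (kpz_hasFPS (3/2) (by norm_num)).hasFPowerSeriesAt
  have h' : HasFPowerSeriesAt (kpzH : ℝ → ℝ)
      (FormalMultilinearSeries.ofScalars ℝ (kpzCoeff (3/2))) 0 := by rw [kpzH_coe]; exact h
  have := kpzH.hasFPowerSeriesAt_symm kpzH_source h' kpz_series_one
  rw [kpzH_zero] at this
  exact this.analyticAt

lemma kpzZ_zero : kpzZ 0 = 0 := by
  have := kpzH.left_inv kpzH_source
  rw [kpzH_zero] at this
  exact this

lemma kpzZ_right : ∀ᶠ t in nhds (0:ℝ), kpzF (3/2) (kpzZ t) = t := by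
  filter_upwards [kpzH.eventually_right_inverse kpzH_target] with t ht
  rw [← kpzH_coe]; exact ht

lemma kpzZ_left : ∀ᶠ w in nhds (0:ℝ), kpzZ (kpzF (3/2) w) = w := by
  filter_upwards [kpzH.eventually_left_inverse kpzH_source] with w hw
  rw [kpzZ, ← kpzH_coe]; exact hw

lemma sqrt_four : Real.sqrt 4 = 2 := by
  rw [show (4:ℝ) = 2^2 by norm_num, Real.sqrt_sq (by norm_num : (0:ℝ) ≤ 2)]

lemma kpz_d1 : deriv (kpzF (3/2)) 0 = 1 / Real.sqrt (2*π) := by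
  rw [← iteratedDeriv_one, kpz_iteratedDeriv (by norm_num)]
  rw [show kpzCoeff (3/2) 1 = (1/Real.sqrt (2*π)) * (-1)^0 / (((0:ℕ):ℝ)+1)^((3:ℝ)/2) from rfl]
  norm_num

lemma kpz_d2 : iteratedDeriv 2 (kpzF (3/2)) 0 = -((1/Real.sqrt (2*π)) / Real.sqrt 2) := by
  rw [kpz_iteratedDeriv (by norm_num)]
  rw [show kpzCoeff (3/2) 2 = (1/Real.sqrt (2*π)) * (-1)^1 / (((1:ℕ):ℝ)+1)^((3:ℝ)/2) from rfl]
  rw [show (((1:ℕ):ℝ)+1) = 2 by norm_num, rpow_three_half (by norm_num : (0:ℝ) < 2)]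
  have h2 : (0:ℝ) < Real.sqrt 2 := by positivity
  have hq : (0:ℝ) < Real.sqrt (2*π) := by positivity
  field_simp
  ring_nf

lemma kpz_d3 : iteratedDeriv 3 (kpzF (3/2)) 0 = 2 * (1/Real.sqrt (2*π)) / Real.sqrt 3 := by
  rw [kpz_iteratedDeriv (by norm_num)]
  rw [show kpzCoeff (3/2) 3 = (1/Real.sqrt (2*π)) * (-1)^2 / (((2:ℕ):ℝ)+1)^((3:ℝ)/2) from rfl]
  rw [show (((2:ℕ):ℝ)+1) = 3 by norm_num, rpow_three_half (by norm_num : (0:ℝ) < 3)]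
  have h3 : (0:ℝ) < Real.sqrt 3 := by positivity
  have hq : (0:ℝ) < Real.sqrt (2*π) := by positivity
  field_simp
  ring_nf

lemma kpz_d4 : iteratedDeriv 4 (kpzF (3/2)) 0 = -(3 * (1/Real.sqrt (2*π))) := by
  rw [kpz_iteratedDeriv (by norm_num)]
  rw [show kpzCoeff (3/2) 4 = (1/Real.sqrt (2*π)) * (-1)^3 / (((3:ℕ):ℝ)+1)^((3:ℝ)/2) from rfl]
  rw [show (((3:ℕ):ℝ)+1) = 4 by norm_num, rpow_three_half (by norm_num : (0:ℝ) < 4), sqrt_four]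
  norm_num [Nat.factorial]
  ring

lemma kpz_b1 : deriv (kpzF (5/2)) 0 = 1 / Real.sqrt (2*π) := by
  rw [← iteratedDeriv_one, kpz_iteratedDeriv (by norm_num)]
  rw [show kpzCoeff (5/2) 1 = (1/Real.sqrt (2*π)) * (-1)^0 / (((0:ℕ):ℝ)+1)^((5:ℝ)/2) from rfl]
  norm_num

lemma kpz_b2 : iteratedDeriv 2 (kpzF (5/2)) 0 = -((1/Real.sqrt (2*π)) / (2 * Real.sqrt 2)) := by
  rw [kpz_iteratedDeriv (by norm_num)]
  rw [show kpzCoeff (5/2) 2 = (1/Real.sqrt (2*π)) * (-1)^1 / (((1:ℕ):ℝ)+1)^((5:ℝ)/2) from rfl]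
  rw [show (((1:ℕ):ℝ)+1) = 2 by norm_num, rpow_five_half (by norm_num : (0:ℝ) < 2)]
  have h2 : (0:ℝ) < Real.sqrt 2 := by positivity
  have hq : (0:ℝ) < Real.sqrt (2*π) := by positivity
  field_simp
  ring_nf

lemma kpz_b3 : iteratedDeriv 3 (kpzF (5/2)) 0 = 2 * (1/Real.sqrt (2*π)) / (3 * Real.sqrt 3) := by
  rw [kpz_iteratedDeriv (by norm_num)]
  rw [show kpzCoeff (5/2) 3 = (1/Real.sqrt (2*π)) * (-1)^2 / (((2:ℕ):ℝ)+1)^((5:ℝ)/2) from rfl]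
  rw [show (((2:ℕ):ℝ)+1) = 3 by norm_num, rpow_five_half (by norm_num : (0:ℝ) < 3)]
  have h3 : (0:ℝ) < Real.sqrt 3 := by positivity
  have hq : (0:ℝ) < Real.sqrt (2*π) := by positivity
  field_simp
  ring_nf

lemma kpz_b4 : iteratedDeriv 4 (kpzF (5/2)) 0 = -(3 * (1/Real.sqrt (2*π)) / 4) := by
  rw [kpz_iteratedDeriv (by norm_num)]
  rw [show kpzCoeff (5/2) 4 = (1/Real.sqrt (2*π)) * (-1)^3 / (((3:ℕ):ℝ)+1)^((5:ℝ)/2) from rfl]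
  rw [show (((3:ℕ):ℝ)+1) = 4 by norm_num, rpow_five_half (by norm_num : (0:ℝ) < 4), sqrt_four]
  norm_num [Nat.factorial]
  ring

lemma itid2 : iteratedDeriv 2 (fun t : ℝ => t) = fun _ => (0:ℝ) := by
  have h1 : deriv (fun t : ℝ => t) = fun _ => (1:ℝ) := by funext t; simp
  rw [show (2:ℕ) = 1 + 1 from rfl, iteratedDeriv_succ, iteratedDeriv_one, h1]
  funext t; simp

lemma itid3 : iteratedDeriv 3 (fun t : ℝ => t) = fun _ => (0:ℝ) := by
  rw [show (3:ℕ) = 2 + 1 from rfl, iteratedDeriv_succ, itid2]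
  funext t; simp

lemma itid4 : iteratedDeriv 4 (fun t : ℝ => t) = fun _ => (0:ℝ) := by
  rw [show (4:ℕ) = 3 + 1 from rfl, iteratedDeriv_succ, itid3]
  funext t; simp

set_option maxHeartbeats 1000000 in
/-- with `s(z) = (1/√(2π)) ∑_{k≥1} (-1)^{k+1} z^k/k^{3/2}` and
`Φ(z) = (1/√(2π)) ∑_{k≥1} (-1)^{k+1} z^k/k^{5/2}`, one has `s(0) = 0`,
`s'(0) = 1/√(2π) ≠ 0`, there is an analytic local inverse `z(·)` of `s` near `0`, the
composite `F = Φ ∘ z` is analytic near `0`, and `F'(0) = 1`, `F''(0) = √π/2`,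
`F'''(0) = (3/2 - 8/(3√3))π`, `F''''(0) = (15/2 + 9/√2 - 24/√3)π^{3/2}`. -/
theorem stmt_15 :
    let s : ℝ → ℝ := fun z => (1 / Real.sqrt (2 * π)) *
      ∑' k : ℕ, (-1 : ℝ) ^ k * z ^ (k + 1) / ((k : ℝ) + 1) ^ ((3 : ℝ) / 2)
    let Φ : ℝ → ℝ := fun z => (1 / Real.sqrt (2 * π)) *
      ∑' k : ℕ, (-1 : ℝ) ^ k * z ^ (k + 1) / ((k : ℝ) + 1) ^ ((5 : ℝ) / 2)
    s 0 = 0 ∧ deriv s 0 = 1 / Real.sqrt (2 * π) ∧ (1 : ℝ) / Real.sqrt (2 * π) ≠ 0 ∧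
    ∃ z : ℝ → ℝ, AnalyticAt ℝ z 0 ∧ z 0 = 0 ∧
      (∀ᶠ t in nhds (0 : ℝ), s (z t) = t) ∧ (∀ᶠ w in nhds (0 : ℝ), z (s w) = w) ∧
      AnalyticAt ℝ (Φ ∘ z) 0 ∧
      deriv (Φ ∘ z) 0 = 1 ∧
      iteratedDeriv 2 (Φ ∘ z) 0 = Real.sqrt π / 2 ∧
      iteratedDeriv 3 (Φ ∘ z) 0 = (3 / 2 - 8 / (3 * Real.sqrt 3)) * π ∧
      iteratedDeriv 4 (Φ ∘ z) 0
        = (15 / 2 + 9 / Real.sqrt 2 - 24 / Real.sqrt 3) * π ^ ((3 : ℝ) / 2) := by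
  intro s Φ
  have hs : s = kpzF (3/2) := rfl
  have hΦ : Φ = kpzF (5/2) := rfl
  have hΦa : AnalyticAt ℝ (kpzF (5/2)) (kpzZ 0) := by
    rw [kpzZ_zero]; exact kpz_analyticAt (by norm_num)
  have hsa : AnalyticAt ℝ (kpzF (3/2)) 0 := kpz_analyticAt (by norm_num)
  have hΦ0 : AnalyticAt ℝ (kpzF (5/2)) 0 := kpz_analyticAt (by norm_num)
  obtain ⟨S1, S2, S3, S4⟩ := faa hsa kpzZ_analytic kpzZ_zero
  obtain ⟨P1, P2, P3, P4⟩ := faa hΦ0 kpzZ_analytic kpzZ_zero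
  have hid : (kpzF (3/2)) ∘ kpzZ =ᶠ[nhds (0:ℝ)] fun t => t := by
    filter_upwards [kpzZ_right] with t ht using ht
  have I1 : deriv ((kpzF (3/2)) ∘ kpzZ) 0 = 1 := by rw [hid.deriv_eq]; simp
  have I2 : iteratedDeriv 2 ((kpzF (3/2)) ∘ kpzZ) 0 = 0 := by
    rw [(ev_iteratedDeriv hid 2).eq_of_nhds, itid2]
  have I3 : iteratedDeriv 3 ((kpzF (3/2)) ∘ kpzZ) 0 = 0 := by
    rw [(ev_iteratedDeriv hid 3).eq_of_nhds, itid3]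
  have I4 : iteratedDeriv 4 ((kpzF (3/2)) ∘ kpzZ) 0 = 0 := by
    rw [(ev_iteratedDeriv hid 4).eq_of_nhds, itid4]
  have hsplit : Real.sqrt (2*π) = Real.sqrt 2 * Real.sqrt π :=
    Real.sqrt_mul (by norm_num) π
  have hupos : (0:ℝ) < Real.sqrt 2 := by positivity
  have hvpos : (0:ℝ) < Real.sqrt 3 := by positivity
  have hwpos : (0:ℝ) < Real.sqrt π := by positivity
  have hu2 : Real.sqrt 2 ^ 2 = 2 := Real.sq_sqrt (by norm_num)
  have hv2 : Real.sqrt 3 ^ 2 = 3 := Real.sq_sqrt (by norm_num)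
  have hw2 : Real.sqrt π ^ 2 = π := Real.sq_sqrt Real.pi_pos.le
  have hu3 : Real.sqrt 2 ^ 3 = 2 * Real.sqrt 2 := by rw [pow_succ, hu2]
  have hu4 : Real.sqrt 2 ^ 4 = 4 := by rw [pow_succ, hu3]; linear_combination 2*hu2
  have hu5 : Real.sqrt 2 ^ 5 = 4 * Real.sqrt 2 := by rw [pow_succ, hu4]
  have hu6 : Real.sqrt 2 ^ 6 = 8 := by rw [pow_succ, hu5]; linear_combination 4*hu2
  have hu7 : Real.sqrt 2 ^ 7 = 8 * Real.sqrt 2 := by rw [pow_succ, hu6]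
  have hu8 : Real.sqrt 2 ^ 8 = 16 := by rw [pow_succ, hu7]; linear_combination 8*hu2
  have hv3 : Real.sqrt 3 ^ 3 = 3 * Real.sqrt 3 := by rw [pow_succ, hv2]
  have hv4 : Real.sqrt 3 ^ 4 = 9 := by rw [pow_succ, hv3]; linear_combination 3*hv2
  have hv5 : Real.sqrt 3 ^ 5 = 9 * Real.sqrt 3 := by rw [pow_succ, hv4]
  have hv6 : Real.sqrt 3 ^ 6 = 27 := by rw [pow_succ, hv5]; linear_combination 9*hv2
  have hu9 : Real.sqrt 2 ^ 9 = 16 * Real.sqrt 2 := by rw [pow_succ, hu8]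
  have hu10 : Real.sqrt 2 ^ 10 = 32 := by rw [pow_succ, hu9]; linear_combination 16*hu2
  have hu11 : Real.sqrt 2 ^ 11 = 32 * Real.sqrt 2 := by rw [pow_succ, hu10]
  have hu12 : Real.sqrt 2 ^ 12 = 64 := by rw [pow_succ, hu11]; linear_combination 32*hu2
  have hv7 : Real.sqrt 3 ^ 7 = 27 * Real.sqrt 3 := by rw [pow_succ, hv6]
  have hv8 : Real.sqrt 3 ^ 8 = 81 := by rw [pow_succ, hv7]; linear_combination 27*hv2
  have hw3 : Real.sqrt π ^ 3 = π * Real.sqrt π := by rw [pow_succ, hw2]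
  have hw4 : Real.sqrt π ^ 4 = π ^ 2 := by rw [pow_succ, hw3]; linear_combination π*hw2
  have hw5 : Real.sqrt π ^ 5 = π ^ 2 * Real.sqrt π := by rw [pow_succ, hw4]
  have hw6 : Real.sqrt π ^ 6 = π ^ 3 := by rw [pow_succ, hw5]; linear_combination (π^2)*hw2
  have hw7 : Real.sqrt π ^ 7 = π ^ 3 * Real.sqrt π := by rw [pow_succ, hw6]
  have hw8 : Real.sqrt π ^ 8 = π ^ 4 := by rw [pow_succ, hw7]; linear_combination (π^3)*hw2
  set e1 := deriv kpzZ 0 with he1def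
  set e2 := iteratedDeriv 2 kpzZ 0 with he2def
  set e3 := iteratedDeriv 3 kpzZ 0 with he3def
  set e4 := iteratedDeriv 4 kpzZ 0 with he4def
  rw [I1, kpz_d1] at S1
  rw [I2, kpz_d1, kpz_d2] at S2
  rw [I3, kpz_d1, kpz_d2, kpz_d3] at S3
  rw [I4, kpz_d1, kpz_d2, kpz_d3, kpz_d4] at S4
  rw [kpz_b1] at P1
  rw [kpz_b1, kpz_b2] at P2
  rw [kpz_b1, kpz_b2, kpz_b3] at P3
  rw [kpz_b1, kpz_b2, kpz_b3, kpz_b4] at P4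
  rw [hsplit] at S1 S2 S3 S4 P1 P2 P3 P4
  have he1 : e1 = Real.sqrt 2 * Real.sqrt π := by
    field_simp at S1
    linarith
  rw [he1] at S2 S3 S4 P1 P2 P3 P4
  have he2 : e2 = Real.sqrt 2 * π := by
    field_simp at S2
    ring_nf at S2
    simp only [hu2, hu3, hu4, hu5, hu6, hu7, hu8, hu9, hu10, hu11, hu12, hv2, hv3, hv4, hv5, hv6, hv7, hv8, hw2, hw3, hw4, hw5, hw6, hw7, hw8] at S2
    have h : e2 * (2*Real.sqrt π) = (Real.sqrt 2 * π) * (2*Real.sqrt π) := by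
      ring_nf
      try simp only [hu2, hu3, hu4, hu5, hu6, hu7, hu8, hu9, hu10, hu11, hu12, hv2, hv3, hv4, hv5, hv6, hv7, hv8, hw2, hw3, hw4, hw5, hw6, hw7, hw8]
      linear_combination (-(2*Real.sqrt π)) * S2
    exact mul_right_cancel₀ (by positivity) h
  rw [he2] at S3 S4 P2 P3 P4
  have he3 : e3 = 3*Real.sqrt 2*π*Real.sqrt π - (4/3)*Real.sqrt 2*Real.sqrt 3*π*Real.sqrt π := by
    field_simp at S3
    ring_nf at S3
    simp only [hu2, hu3, hu4, hu5, hu6, hu7, hu8, hu9, hu10, hu11, hu12, hv2, hv3, hv4, hv5, hv6, hv7, hv8, hw2, hw3, hw4, hw5, hw6, hw7, hw8] at S3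
    have h : e3 * (2*Real.sqrt 2*π*Real.sqrt 3)
        = (3*Real.sqrt 2*π*Real.sqrt π - (4/3)*Real.sqrt 2*Real.sqrt 3*π*Real.sqrt π)
          * (2*Real.sqrt 2*π*Real.sqrt 3) := by
      ring_nf
      try simp only [hu2, hu3, hu4, hu5, hu6, hu7, hu8, hu9, hu10, hu11, hu12, hv2, hv3, hv4, hv5, hv6, hv7, hv8, hw2, hw3, hw4, hw5, hw6, hw7, hw8]
      linear_combination (-(2*Real.sqrt 2*π))*S3 + (6*Real.sqrt 3*π^2*Real.sqrt π - 8*π^2*Real.sqrt π)*hu2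
    exact mul_right_cancel₀ (by positivity) h
  rw [he3] at S4 P3 P4
  have he4 : e4 = 12*π^2 + 15*Real.sqrt 2*π^2 - (40/3)*Real.sqrt 2*Real.sqrt 3*π^2 := by
    field_simp at S4
    ring_nf at S4
    simp only [hu2, hu3, hu4, hu5, hu6, hu7, hu8, hu9, hu10, hu11, hu12, hv2, hv3, hv4, hv5, hv6, hv7, hv8, hw2, hw3, hw4, hw5, hw6, hw7, hw8] at S4
    have h : e4 * (24*π^2*Real.sqrt 3)
        = (12*π^2 + 15*Real.sqrt 2*π^2 - (40/3)*Real.sqrt 2*Real.sqrt 3*π^2)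
          * (24*π^2*Real.sqrt 3) := by
      ring_nf
      try simp only [hu2, hu3, hu4, hu5, hu6, hu7, hu8, hu9, hu10, hu11, hu12, hv2, hv3, hv4, hv5, hv6, hv7, hv8, hw2, hw3, hw4, hw5, hw6, hw7, hw8]
      linear_combination (-(8*π^2))*S4
    exact mul_right_cancel₀ (by positivity) h
  rw [he4] at P4
  refine ⟨?_, ?_, ?_, kpzZ, kpzZ_analytic, kpzZ_zero, ?_, ?_, ?_, ?_, ?_, ?_, ?_⟩
  · rw [hs]; exact kpz_zero _
  · rw [hs]; exact kpz_d1
  · exact ne_of_gt kpz_eps_pos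
  · rw [hs]; exact kpzZ_right
  · rw [hs]; exact kpzZ_left
  · rw [hΦ]; exact hΦa.comp kpzZ_analytic
  · rw [hΦ, P1]; field_simp
  · rw [hΦ, P2]
    field_simp
    ring_nf
    try simp only [hu2, hu3, hu4, hu5, hu6, hu7, hu8, hu9, hu10, hu11, hu12, hv2, hv3, hv4, hv5, hv6, hv7, hv8, hw2, hw3, hw4, hw5, hw6, hw7, hw8]
    ring_nf
  · rw [hΦ, P3]
    field_simp
    ring_nf
    try simp only [hu2, hu3, hu4, hu5, hu6, hu7, hu8, hu9, hu10, hu11, hu12, hv2, hv3, hv4, hv5, hv6, hv7, hv8, hw2, hw3, hw4, hw5, hw6, hw7, hw8]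
    ring_nf
  · rw [hΦ, P4, rpow_three_half Real.pi_pos]
    field_simp
    ring_nf
    try simp only [hu2, hu3, hu4, hu5, hu6, hu7, hu8, hu9, hu10, hu11, hu12, hv2, hv3, hv4, hv5, hv6, hv7, hv8, hw2, hw3, hw4, hw5, hw6, hw7, hw8]
    ring_nf
end
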